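/- arXiv:1810.07422 — 4 statements merged into one kernel-verified Lean document; each statement's English description precedes it below -/
import Mathlib

section
/- Let S₁,…,S_m be an alternating k-decomposition of a sequence S[1:n] of distinct reals and let A be a k-rollercoaster in S. Then every part S_ℓ contains elements of at most four (necessarily consecutive) runs of A; that is, at most four runs of A contain an element whose position in S lies in the part S_ℓ. -/
namespace Rollercoaster

/-- The values `S 0, ..., S (n-1)` are pairwise distinct. -/
def DistinctOn (n : ℕ) (S : ℕ → ℝ) : Prop :=
  ∀ i j, i < n → j < n → S i = S j → i = j

/-- The contiguous slice `A p, A (p+1), ..., A q` is strictly increasing. -/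
def IncrSlice (A : ℕ → ℝ) (p q : ℕ) : Prop :=
  ∀ t, p ≤ t → t < q → A t < A (t + 1)

/-- The contiguous slice `A p, A (p+1), ..., A q` is strictly decreasing. -/
def DecrSlice (A : ℕ → ℝ) (p q : ℕ) : Prop :=
  ∀ t, p ≤ t → t < q → A (t + 1) < A t

/-- The contiguous slice `A p, ..., A q` is strictly monotone (increasing or decreasing). -/
def MonoSlice (A : ℕ → ℝ) (p q : ℕ) : Prop :=
  IncrSlice A p q ∨ DecrSlice A p q

/-- `[p, q]` is a run of the length-`m` sequence `A 0, ..., A (m-1)`: a maximal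
contiguous strictly monotone slice. -/
def IsRun (m : ℕ) (A : ℕ → ℝ) (p q : ℕ) : Prop :=
  p ≤ q ∧ q < m ∧ MonoSlice A p q ∧
    (p = 0 ∨ ¬ MonoSlice A (p - 1) q) ∧ (q + 1 = m ∨ ¬ MonoSlice A p (q + 1))

/-- The length-`m` sequence `A 0, ..., A (m-1)` is a `k`-rollercoaster:
every run has length at least `k`. -/
def IsRollercoaster (k m : ℕ) (A : ℕ → ℝ) : Prop :=
  ∀ p q, IsRun m A p q → k ≤ q + 1 - p

/-- The last run of the length-`m` sequence `A 0, ..., A (m-1)` is increasing. -/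
def LastRunInc (m : ℕ) (A : ℕ → ℝ) : Prop :=
  1 ≤ m ∧ ∃ p, IsRun m A p (m - 1) ∧ IncrSlice A p (m - 1)

/-- The last run of the length-`m` sequence `A 0, ..., A (m-1)` is decreasing. -/
def LastRunDec (m : ℕ) (A : ℕ → ℝ) : Prop :=
  1 ≤ m ∧ ∃ p, IsRun m A p (m - 1) ∧ DecrSlice A p (m - 1)

/-- `idx` enumerates `m` positions, strictly increasing, all in `[a, b)`;
this selects a (not necessarily contiguous) subsequence of the positions `a, ..., b-1`. -/
def IsSubseqIdx (a b m : ℕ) (idx : ℕ → ℕ) : Prop :=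
  (∀ t, t < m → a ≤ idx t ∧ idx t < b) ∧ ∀ s t, s < t → t < m → idx s < idx t

/-- Length of a longest strictly increasing subsequence of `S` on positions `[a, b)`. -/
noncomputable def LIS (S : ℕ → ℝ) (a b : ℕ) : ℕ :=
  sSup {m | ∃ idx : ℕ → ℕ, IsSubseqIdx a b m idx ∧
    ∀ s t, s < t → t < m → S (idx s) < S (idx t)}

/-- Length of a longest strictly decreasing subsequence of `S` on positions `[a, b)`. -/
noncomputable def LDS (S : ℕ → ℝ) (a b : ℕ) : ℕ :=
  sSup {m | ∃ idx : ℕ → ℕ, IsSubseqIdx a b m idx ∧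
    ∀ s t, s < t → t < m → S (idx t) < S (idx s)}

/-- The statistic used for the `ℓ`-th part of an alternating decomposition:
LIS for odd parts, LDS for even parts, over positions `[a, b)`. -/
noncomputable def partStat (S : ℕ → ℝ) (l a b : ℕ) : ℕ :=
  if l % 2 = 1 then LIS S a b else LDS S a b

/-- The part occupying positions `[a, b)` has its statistic equal to `k`, and removing
its last element makes the statistic smaller than `k` (shortest such prefix). -/
def PartExact (k : ℕ) (S : ℕ → ℝ) (l a b : ℕ) : Prop :=
  partStat S l a b = k ∧ partStat S l a (b - 1) < k

/-- `c 0 = 0 < c 1 < ... < c m = n` are the cut points of an alternating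
`k`-decomposition of `S` on positions `[0, n)`: the `ℓ`-th part occupies positions
`[c (ℓ-1), c ℓ)`; every non-final part is the shortest prefix of the rest whose
statistic equals `k`, and the final part either is also such a shortest prefix or
the whole remainder has statistic smaller than `k`. -/
def IsAltDecomp (k : ℕ) (S : ℕ → ℝ) (n m : ℕ) (c : ℕ → ℕ) : Prop :=
  c 0 = 0 ∧ c m = n ∧ (∀ l, l < m → c l < c (l + 1)) ∧
    (∀ l, 1 ≤ l → l < m → PartExact k S l (c (l - 1)) (c l)) ∧
    (1 ≤ m → (PartExact k S m (c (m - 1)) n ∨ partStat S m (c (m - 1)) n < k))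

lemma incr_of_sub {A : ℕ → ℝ} {p q p' q' : ℕ} (h : IncrSlice A p q)
    (h1 : p ≤ p') (h2 : q' ≤ q) : IncrSlice A p' q' :=
  fun t ht1 ht2 => h t (by omega) (by omega)

lemma decr_of_sub {A : ℕ → ℝ} {p q p' q' : ℕ} (h : DecrSlice A p q)
    (h1 : p ≤ p') (h2 : q' ≤ q) : DecrSlice A p' q' :=
  fun t ht1 ht2 => h t (by omega) (by omega)

lemma mono_of_sub {A : ℕ → ℝ} {p q p' q' : ℕ} (h : MonoSlice A p q)
    (h1 : p ≤ p') (h2 : q' ≤ q) : MonoSlice A p' q' := by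
  rcases h with h | h
  · exact Or.inl (incr_of_sub h h1 h2)
  · exact Or.inr (decr_of_sub h h1 h2)

lemma incr_glue {A : ℕ → ℝ} {p q p' q' : ℕ} (h : IncrSlice A p q)
    (h' : IncrSlice A p' q') (hpq : p' ≤ q) : IncrSlice A p q' := by
  intro t ht1 ht2
  rcases Nat.lt_or_ge t q with h1 | h1
  · exact h t ht1 h1
  · exact h' t (by omega) ht2

lemma decr_glue {A : ℕ → ℝ} {p q p' q' : ℕ} (h : DecrSlice A p q)
    (h' : DecrSlice A p' q') (hpq : p' ≤ q) : DecrSlice A p q' := by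
  intro t ht1 ht2
  rcases Nat.lt_or_ge t q with h1 | h1
  · exact h t ht1 h1
  · exact h' t (by omega) ht2

lemma incr_of_mono_step {A : ℕ → ℝ} {p q i : ℕ} (h : MonoSlice A p q)
    (h1 : p ≤ i) (h2 : i < q) (h3 : A i < A (i + 1)) : IncrSlice A p q := by
  rcases h with h | h
  · exact h
  · exact absurd (h i h1 h2) (by linarith)

lemma decr_of_mono_step {A : ℕ → ℝ} {p q i : ℕ} (h : MonoSlice A p q)
    (h1 : p ≤ i) (h2 : i < q) (h3 : A (i + 1) < A i) : DecrSlice A p q := by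
  rcases h with h | h
  · exact absurd (h i h1 h2) (by linarith)
  · exact h

lemma incr_mono {A : ℕ → ℝ} {p q s t : ℕ} (h : IncrSlice A p q)
    (hs : p ≤ s) (hst : s < t) (ht : t ≤ q) : A s < A t := by
  induction t with
  | zero => omega
  | succ t ih =>
    rcases Nat.lt_or_ge s t with h1 | h1
    · exact lt_trans (ih (by omega) (by omega)) (h t (by omega) (by omega))
    · have hst' : s = t := by omega
      subst hst'
      exact h s hs (by omega)

lemma decr_mono {A : ℕ → ℝ} {p q s t : ℕ} (h : DecrSlice A p q)
    (hs : p ≤ s) (hst : s < t) (ht : t ≤ q) : A t < A s := by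
  induction t with
  | zero => omega
  | succ t ih =>
    rcases Nat.lt_or_ge s t with h1 | h1
    · exact lt_trans (h t (by omega) (by omega)) (ih (by omega) (by omega))
    · have hst' : s = t := by omega
      subst hst'
      exact h s hs (by omega)

lemma run_order {m : ℕ} {A : ℕ → ℝ} {p q p' q' : ℕ}
    (h : IsRun m A p q) (h' : IsRun m A p' q') (hqq : q < q') :
    p < p' ∧ q ≤ p' := by
  obtain ⟨hpq, hqm, hmono, hleft, hright⟩ := h
  obtain ⟨hpq', hqm', hmono', hleft', hright'⟩ := h'
  have hp : p < p' := by
    by_contra hc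
    push_neg at hc
    have hm : MonoSlice A p (q + 1) := mono_of_sub hmono' hc (by omega)
    rcases hright with h1 | h1
    · omega
    · exact h1 hm
  refine ⟨hp, ?_⟩
  by_contra hc
  push_neg at hc
  rcases hmono with hi | hd <;> rcases hmono' with hi' | hd'
  · have hg : IncrSlice A p q' := incr_glue hi hi' (by omega)
    have hm : MonoSlice A p (q + 1) := Or.inl (incr_of_sub hg le_rfl (by omega))
    rcases hright with h1 | h1
    · omega
    · exact h1 hm
  · have h1 : A p' < A (p' + 1) := hi p' (by omega) (by omega)
    have h2 : A (p' + 1) < A p' := hd' p' le_rfl (by omega)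
    linarith
  · have h1 := hd p' (by omega) (by omega)
    have h2 := hi' p' le_rfl (by omega)
    linarith
  · have hg : DecrSlice A p q' := decr_glue hd hd' (by omega)
    have hm : MonoSlice A p (q + 1) := Or.inr (decr_of_sub hg le_rfl (by omega))
    rcases hright with h1 | h1
    · omega
    · exact h1 hm

lemma run_eq_of_q {m : ℕ} {A : ℕ → ℝ} {p p' q : ℕ}
    (h : IsRun m A p q) (h' : IsRun m A p' q) : p = p' := by
  by_contra hne
  rcases Nat.lt_or_ge p p' with hlt | hge
  · rcases h'.2.2.2.1 with h1 | h1
    · omega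
    · exact h1 (mono_of_sub h.2.2.1 (by omega) le_rfl)
  · have hlt : p' < p := by omega
    rcases h.2.2.2.1 with h1 | h1
    · omega
    · exact h1 (mono_of_sub h'.2.2.1 (by omega) le_rfl)

lemma exists_run_step_incr {m : ℕ} {A : ℕ → ℝ} {i : ℕ} (h : i + 1 < m)
    (hstep : A i < A (i + 1)) :
    ∃ p q, IsRun m A p q ∧ p ≤ i ∧ i + 1 ≤ q ∧ IncrSlice A p q := by
  have hiP : IncrSlice A i (i + 1) := by
    intro t h1 h2
    have ht : t = i := by omega
    subst ht
    exact hstep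
  have hPne : i ∈ {p | IncrSlice A p (i + 1)} := hiP
  set p := sInf {p | IncrSlice A p (i + 1)} with hp
  have hpP : IncrSlice A p (i + 1) := Nat.sInf_mem ⟨i, hPne⟩
  have hpi : p ≤ i := Nat.sInf_le hPne
  have hQne : i + 1 ∈ {q | q < m ∧ IncrSlice A i q} := ⟨h, hiP⟩
  have hQbdd : BddAbove {q | q < m ∧ IncrSlice A i q} := ⟨m, fun x hx => le_of_lt hx.1⟩
  set q := sSup {q | q < m ∧ IncrSlice A i q} with hq
  have hqQ : q < m ∧ IncrSlice A i q := Nat.sSup_mem ⟨_, hQne⟩ hQbdd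
  have hq1 : i + 1 ≤ q := le_csSup hQbdd hQne
  have hincr : IncrSlice A p q := incr_glue hpP hqQ.2 (by omega)
  refine ⟨p, q, ⟨by omega, hqQ.1, Or.inl hincr, ?_, ?_⟩, hpi, hq1, hincr⟩
  · rcases Nat.eq_zero_or_pos p with h0 | h0
    · exact Or.inl h0
    · right
      intro hmono
      have hi1 : IncrSlice A (p - 1) q := incr_of_mono_step hmono (by omega) (by omega) hstep
      have hi2 : p - 1 ∈ {p | IncrSlice A p (i + 1)} := incr_of_sub hi1 le_rfl (by omega)
      have := Nat.sInf_le hi2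
      omega
  · rcases Nat.lt_or_ge (q + 1) m with hlt | hge
    · right
      intro hmono
      have h2 : IncrSlice A p (q + 1) := incr_of_mono_step hmono (by omega) (by omega) hstep
      have h3 : q + 1 ∈ {q | q < m ∧ IncrSlice A i q} := ⟨hlt, incr_of_sub h2 (by omega) le_rfl⟩
      have := le_csSup hQbdd h3
      omega
    · left
      omega

lemma exists_run_step_decr {m : ℕ} {A : ℕ → ℝ} {i : ℕ} (h : i + 1 < m)
    (hstep : A (i + 1) < A i) :
    ∃ p q, IsRun m A p q ∧ p ≤ i ∧ i + 1 ≤ q ∧ DecrSlice A p q := by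
  have hiP : DecrSlice A i (i + 1) := by
    intro t h1 h2
    have ht : t = i := by omega
    subst ht
    exact hstep
  have hPne : i ∈ {p | DecrSlice A p (i + 1)} := hiP
  set p := sInf {p | DecrSlice A p (i + 1)} with hp
  have hpP : DecrSlice A p (i + 1) := Nat.sInf_mem ⟨i, hPne⟩
  have hpi : p ≤ i := Nat.sInf_le hPne
  have hQne : i + 1 ∈ {q | q < m ∧ DecrSlice A i q} := ⟨h, hiP⟩
  have hQbdd : BddAbove {q | q < m ∧ DecrSlice A i q} := ⟨m, fun x hx => le_of_lt hx.1⟩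
  set q := sSup {q | q < m ∧ DecrSlice A i q} with hq
  have hqQ : q < m ∧ DecrSlice A i q := Nat.sSup_mem ⟨_, hQne⟩ hQbdd
  have hq1 : i + 1 ≤ q := le_csSup hQbdd hQne
  have hdecr : DecrSlice A p q := decr_glue hpP hqQ.2 (by omega)
  refine ⟨p, q, ⟨by omega, hqQ.1, Or.inr hdecr, ?_, ?_⟩, hpi, hq1, hdecr⟩
  · rcases Nat.eq_zero_or_pos p with h0 | h0
    · exact Or.inl h0
    · right
      intro hmono
      have hi1 : DecrSlice A (p - 1) q := decr_of_mono_step hmono (by omega) (by omega) hstep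
      have hi2 : p - 1 ∈ {p | DecrSlice A p (i + 1)} := decr_of_sub hi1 le_rfl (by omega)
      have := Nat.sInf_le hi2
      omega
  · rcases Nat.lt_or_ge (q + 1) m with hlt | hge
    · right
      intro hmono
      have h2 : DecrSlice A p (q + 1) := decr_of_mono_step hmono (by omega) (by omega) hstep
      have h3 : q + 1 ∈ {q | q < m ∧ DecrSlice A i q} := ⟨hlt, decr_of_sub h2 (by omega) le_rfl⟩
      have := le_csSup hQbdd h3
      omega
    · left
      omega



lemma subseq_le {a b M : ℕ} {f : ℕ → ℕ} (h : IsSubseqIdx a b M f) : M ≤ b := by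
  obtain ⟨hf1, hf2⟩ := h
  by_contra hc
  push_neg at hc
  have key : ∀ t, t < M → t ≤ f t := by
    intro t ht
    induction t with
    | zero => omega
    | succ t ih =>
      have h1 := hf2 t (t + 1) (by omega) ht
      have h2 := ih (by omega)
      omega
  have h1 := key b (by omega)
  have h2 := (hf1 b (by omega)).2
  omega

lemma le_LIS {S : ℕ → ℝ} {a b M : ℕ} (f : ℕ → ℕ)
    (hf : IsSubseqIdx a b M f)
    (hmono : ∀ s t, s < t → t < M → S (f s) < S (f t)) :
    M ≤ LIS S a b := by
  apply le_csSup
  · exact ⟨b, fun M' hM' => by obtain ⟨g, hg, _⟩ := hM'; exact subseq_le hg⟩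
  · exact ⟨f, hf, hmono⟩

lemma le_LDS {S : ℕ → ℝ} {a b M : ℕ} (f : ℕ → ℕ)
    (hf : IsSubseqIdx a b M f)
    (hmono : ∀ s t, s < t → t < M → S (f t) < S (f s)) :
    M ≤ LDS S a b := by
  apply le_csSup
  · exact ⟨b, fun M' hM' => by obtain ⟨g, hg, _⟩ := hM'; exact subseq_le hg⟩
  · exact ⟨f, hf, hmono⟩

lemma slice_le_LIS {S : ℕ → ℝ} {idx : ℕ → ℕ} {mA p q a b : ℕ}
    (hidx : ∀ s t, s < t → t < mA → idx s < idx t)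
    (hq : q < mA)
    (hincr : IncrSlice (fun t => S (idx t)) p q)
    (hwin : ∀ s, p ≤ s → s ≤ q → a ≤ idx s ∧ idx s < b) :
    q + 1 - p ≤ LIS S a b := by
  apply le_LIS (fun t => idx (p + t))
  · constructor
    · intro t ht
      exact hwin (p + t) (by omega) (by omega)
    · intro s t hst ht
      exact hidx (p + s) (p + t) (by omega) (by omega)
  · intro s t hst ht
    exact incr_mono (A := fun t => S (idx t)) hincr (show p ≤ p + s by omega) (show p + s < p + t by omega)
      (show p + t ≤ q by omega)

lemma slice_le_LDS {S : ℕ → ℝ} {idx : ℕ → ℕ} {mA p q a b : ℕ}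
    (hidx : ∀ s t, s < t → t < mA → idx s < idx t)
    (hq : q < mA)
    (hdecr : DecrSlice (fun t => S (idx t)) p q)
    (hwin : ∀ s, p ≤ s → s ≤ q → a ≤ idx s ∧ idx s < b) :
    q + 1 - p ≤ LDS S a b := by
  apply le_LDS (fun t => idx (p + t))
  · constructor
    · intro t ht
      exact hwin (p + t) (by omega) (by omega)
    · intro s t hst ht
      exact hidx (p + s) (p + t) (by omega) (by omega)
  · intro s t hst ht
    exact decr_mono (A := fun t => S (idx t)) hdecr (show p ≤ p + s by omega) (show p + s < p + t by omega)
      (show p + t ≤ q by omega)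

/-- Let `S₁, ..., S_m` be an alternating `k`-decomposition of `S` and `A` a
`k`-rollercoaster in `S`. Then every part contains elements of at most four runs of `A`. -/
theorem stmt1 (k n : ℕ) (hk : 3 ≤ k) (S : ℕ → ℝ) (hS : DistinctOn n S)
    (m : ℕ) (c : ℕ → ℕ) (hdec : IsAltDecomp k S n m c)
    (mA : ℕ) (idx : ℕ → ℕ) (hsub : IsSubseqIdx 0 n mA idx)
    (hroll : IsRollercoaster k mA (fun t => S (idx t)))
    (l : ℕ) (hl1 : 1 ≤ l) (hlm : l ≤ m) :
    Set.ncard {pq : ℕ × ℕ | IsRun mA (fun t => S (idx t)) pq.1 pq.2 ∧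
      ∃ t, pq.1 ≤ t ∧ t ≤ pq.2 ∧ c (l - 1) ≤ idx t ∧ idx t < c l} ≤ 4 := by
  classical
  by_contra hcard
  push_neg at hcard
  set A : ℕ → ℝ := fun t => S (idx t) with hA
  set a := c (l - 1) with ha
  set b := c l with hb
  have hAinj : ∀ i j, i < mA → j < mA → A i = A j → i = j := by
    intro i j hi hj hij
    have h1 := (hsub.1 i hi).2
    have h2 := (hsub.1 j hj).2
    have h3 : idx i = idx j := hS _ _ h1 h2 hij
    by_contra hne
    rcases Nat.lt_or_ge i j with h | h
    · have := hsub.2 i j h hj; omega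
    · have hji : j < i := by omega
      have := hsub.2 j i hji hi; omega
  have hab : a < b := by
    have h1 := hdec.2.2.1 (l - 1) (by omega)
    have h2 : l - 1 + 1 = l := by omega
    rw [h2] at h1
    exact h1
  set RS : Set (ℕ × ℕ) := {pq : ℕ × ℕ | IsRun mA A pq.1 pq.2 ∧
      ∃ t, pq.1 ≤ t ∧ t ≤ pq.2 ∧ a ≤ idx t ∧ idx t < b} with hRS
  have hfin : RS.Finite := by
    apply Set.Finite.subset ((Set.finite_Iio mA).prod (Set.finite_Iio mA))
    rintro ⟨p, q⟩ ⟨hrun, -⟩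
    exact ⟨lt_of_le_of_lt hrun.1 hrun.2.1, hrun.2.1⟩
  have h5 : 5 ≤ hfin.toFinset.card := by
    have := Set.ncard_eq_toFinset_card RS hfin
    omega
  set F := hfin.toFinset with hF
  set G := F.image Prod.snd with hG
  have hcardG : 5 ≤ G.card := by
    rw [hG, Finset.card_image_of_injOn]
    · exact h5
    · rintro ⟨p, q⟩ h1 ⟨p', q'⟩ h2 h3
      simp only [Finset.mem_coe, hF, Set.Finite.mem_toFinset] at h1 h2
      obtain ⟨hr1, -⟩ := h1
      obtain ⟨hr2, -⟩ := h2
      simp only at h3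
      subst h3
      exact Prod.ext (run_eq_of_q hr1 hr2) rfl
  set N := G.card with hN
  have hN5 : 5 ≤ N := hcardG
  set e := G.orderEmbOfFin (hN.symm) with he
  set qv : Fin 5 → ℕ := fun i => e ⟨i.1, lt_of_lt_of_le i.2 hN5⟩ with hqv
  have hqmono : ∀ i j : Fin 5, i.1 < j.1 → qv i < qv j := by
    intro i j hij
    exact e.strictMono (Fin.mk_lt_mk.mpr hij)
  have hqmem : ∀ i : Fin 5, qv i ∈ G := fun i => Finset.orderEmbOfFin_mem G hN.symm _
  have hex : ∀ i : Fin 5, ∃ p t, IsRun mA A p (qv i) ∧ p ≤ t ∧ t ≤ qv i ∧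
      a ≤ idx t ∧ idx t < b := by
    intro i
    have hmem := hqmem i
    rw [hG, Finset.mem_image] at hmem
    obtain ⟨pq, hpqF, hsnd⟩ := hmem
    rw [hF, Set.Finite.mem_toFinset] at hpqF
    obtain ⟨hrun, t, ht1, ht2, ht3, ht4⟩ := hpqF
    rw [← hsnd]
    exact ⟨pq.1, t, hrun, ht1, ht2, ht3, ht4⟩
  choose pv tv hrunv htp htq hta htb using hex
  have hlen : ∀ i, k ≤ qv i + 1 - pv i := fun i => hroll _ _ (hrunv i)
  have hplt : ∀ i, pv i + 2 ≤ qv i := by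
    intro i
    have h1 := hlen i
    have h2 := (hrunv i).1
    omega
  have hqm : ∀ i, qv i < mA := fun i => (hrunv i).2.1
  have h01 := run_order (hrunv 0) (hrunv 1) (hqmono 0 1 (by decide))
  have h12 := run_order (hrunv 1) (hrunv 2) (hqmono 1 2 (by decide))
  have h23 := run_order (hrunv 2) (hrunv 3) (hqmono 2 3 (by decide))
  have h34 := run_order (hrunv 3) (hrunv 4) (hqmono 3 4 (by decide))
  have hidxmono : ∀ s t, s ≤ t → t < mA → idx s ≤ idx t := by
    intro s t hst ht
    rcases Nat.eq_or_lt_of_le hst with h | h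
    · rw [h]
    · exact le_of_lt (hsub.2 s t h ht)
  have hwin : ∀ s, pv 1 ≤ s → s ≤ qv 2 → a ≤ idx s ∧ idx s < b - 1 := by
    intro s hs1 hs2
    have c1 : tv 0 ≤ s := by
      have e1 := htq 0
      have e2 := h01.2
      omega
    have c2 : s < tv 4 := by
      have e1 := h23.2
      have e2 := h34.2
      have e3 := hplt 3
      have e4 := htp 4
      omega
    have hT4q : tv 4 ≤ qv 4 := htq 4
    have hsmA : s < mA := by
      have := hqm 4
      omega
    constructor
    · calc a ≤ idx (tv 0) := hta 0
        _ ≤ idx s := hidxmono _ _ c1 hsmA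
    · have h1 : idx s < idx (tv 4) := hsub.2 s (tv 4) c2 (by have := hqm 4; omega)
      have h2 := htb 4
      omega
  have hstepAt : ∀ j : ℕ, j + 1 < mA → A j ≠ A (j + 1) := by
    intro j hj h
    have := hAinj j (j + 1) (by omega) hj h
    omega
  have hkey : (∃ p q, IsRun mA A p q ∧ IncrSlice A p q ∧ pv 1 ≤ p ∧ q ≤ qv 2) ∧
      (∃ p q, IsRun mA A p q ∧ DecrSlice A p q ∧ pv 1 ≤ p ∧ q ≤ qv 2) := by
    have hq1m : qv 1 + 1 < mA := by
      have e1 := hqmono 1 2 (by decide)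
      have e2 := hqm 2
      omega
    have hnm : ¬ MonoSlice A (pv 1) (qv 1 + 1) := by
      rcases (hrunv 1).2.2.2.2 with h | h
      · omega
      · exact h
    have hrun1q : qv 1 ≤ qv 2 := le_of_lt (hqmono 1 2 (by decide))
    have hq1le : qv 1 ≤ qv 2 := hrun1q
    rcases (hrunv 1).2.2.1 with hM1 | hM1 <;> rcases (hrunv 2).2.2.1 with hM2 | hM2
    · -- both increasing: need a decreasing run between
      have hstep : A (qv 1 + 1) < A (qv 1) := by
        rcases lt_trichotomy (A (qv 1 + 1)) (A (qv 1)) with h | h | h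
        · exact h
        · exact absurd h.symm (hstepAt (qv 1) hq1m)
        · exfalso
          apply hnm
          left
          intro t ht1 ht2
          rcases Nat.lt_or_ge t (qv 1) with h' | h'
          · exact hM1 t ht1 h'
          · have ht' : t = qv 1 := by omega
            subst ht'
            exact h
      obtain ⟨p', q', hrun', hp', hq', hdec'⟩ := exists_run_step_decr hq1m hstep
      have hord := run_order (hrunv 1) hrun' (by omega)
      have hq'le : q' ≤ qv 2 := by
        rcases lt_trichotomy q' (qv 2) with h | h | h
        · omega
        · omega
        · exfalso
          have e1 := (run_order (hrunv 2) hrun' h).2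
          have e2 := hqmono 1 2 (by decide)
          omega
      refine ⟨⟨pv 1, qv 1, hrunv 1, hM1, le_rfl, ?_⟩, ⟨p', q', hrun', hdec', ?_, hq'le⟩⟩
      · exact hq1le
      · have e1 := hord.2
        have e2 := hplt 1
        omega
    · exact ⟨⟨pv 1, qv 1, hrunv 1, hM1, le_rfl, hq1le⟩,
        ⟨pv 2, qv 2, hrunv 2, hM2, le_of_lt h12.1, le_rfl⟩⟩
    · exact ⟨⟨pv 2, qv 2, hrunv 2, hM2, le_of_lt h12.1, le_rfl⟩,
        ⟨pv 1, qv 1, hrunv 1, hM1, le_rfl, hq1le⟩⟩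
    · -- both decreasing: need an increasing run between
      have hstep : A (qv 1) < A (qv 1 + 1) := by
        rcases lt_trichotomy (A (qv 1)) (A (qv 1 + 1)) with h | h | h
        · exact h
        · exact absurd h (hstepAt (qv 1) hq1m)
        · exfalso
          apply hnm
          right
          intro t ht1 ht2
          rcases Nat.lt_or_ge t (qv 1) with h' | h'
          · exact hM1 t ht1 h'
          · have ht' : t = qv 1 := by omega
            subst ht'
            exact h
      obtain ⟨p', q', hrun', hp', hq', hinc'⟩ := exists_run_step_incr hq1m hstep
      have hord := run_order (hrunv 1) hrun' (by omega)
      have hq'le : q' ≤ qv 2 := by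
        rcases lt_trichotomy q' (qv 2) with h | h | h
        · omega
        · omega
        · exfalso
          have e1 := (run_order (hrunv 2) hrun' h).2
          have e2 := hqmono 1 2 (by decide)
          omega
      refine ⟨⟨p', q', hrun', hinc', ?_, hq'le⟩, ⟨pv 1, qv 1, hrunv 1, hM1, le_rfl, hq1le⟩⟩
      have e1 := hord.2
      have e2 := hplt 1
      omega
  obtain ⟨⟨pI, qI, hrunI, hincI, hIl, hIr⟩, ⟨pD, qD, hrunD, hdecD, hDl, hDr⟩⟩ := hkey
  have hlenI := hroll _ _ hrunI
  have hlenD := hroll _ _ hrunD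
  have hwinI : ∀ s, pI ≤ s → s ≤ qI → a ≤ idx s ∧ idx s < b - 1 :=
    fun s hs1 hs2 => hwin s (le_trans hIl hs1) (le_trans hs2 hIr)
  have hwinD : ∀ s, pD ≤ s → s ≤ qD → a ≤ idx s ∧ idx s < b - 1 :=
    fun s hs1 hs2 => hwin s (le_trans hDl hs1) (le_trans hs2 hDr)
  have hLIS1 : k ≤ LIS S a (b - 1) :=
    le_trans (by omega : k ≤ qI + 1 - pI)
      (slice_le_LIS hsub.2 hrunI.2.1 hincI hwinI)
  have hLDS1 : k ≤ LDS S a (b - 1) :=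
    le_trans (by omega : k ≤ qD + 1 - pD)
      (slice_le_LDS hsub.2 hrunD.2.1 hdecD hwinD)
  have hLIS2 : k ≤ LIS S a b :=
    le_trans (by omega : k ≤ qI + 1 - pI)
      (slice_le_LIS hsub.2 hrunI.2.1 hincI
        (fun s hs1 hs2 => ⟨(hwinI s hs1 hs2).1, by have := (hwinI s hs1 hs2).2; omega⟩))
  have hLDS2 : k ≤ LDS S a b :=
    le_trans (by omega : k ≤ qD + 1 - pD)
      (slice_le_LDS hsub.2 hrunD.2.1 hdecD
        (fun s hs1 hs2 => ⟨(hwinD s hs1 hs2).1, by have := (hwinD s hs1 hs2).2; omega⟩))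
  have hfinal : partStat S l a (b - 1) < k ∨ partStat S l a b < k := by
    rcases Nat.lt_or_ge l m with hlt | hge
    · exact Or.inl (hdec.2.2.2.1 l hl1 hlt).2
    · have hlm2 : l = m := le_antisymm hlm hge
      subst hlm2
      have hn : b = n := by rw [hb]; exact hdec.2.1
      rcases hdec.2.2.2.2 (by omega) with hE | hE
      · left
        rw [ha, hn]
        exact hE.2
      · right
        rw [ha, hn]
        exact hE
  have hc1 : k ≤ partStat S l a (b - 1) := by
    unfold partStat
    split
    · exact hLIS1
    · exact hLDS1
  have hc2 : k ≤ partStat S l a b := by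
    unfold partStat
    split
    · exact hLIS2
    · exact hLDS2
  rcases hfinal with h | h <;> omega

end Rollercoaster
end

section
/- Let S₁,…,S_m be an alternating k-decomposition of a sequence S[1:n] of distinct reals, let A be a longest k-rollercoaster in S, suppose x = S[j] is a non-first element of an increasing run of A, and let y = S[j'] be the predecessor of x in that run. If x belongs to the part S_i, then y belongs to one of the parts S_{i−4}, S_{i−3}, S_{i−2}, S_{i−1}, S_i. -/
namespace Rollercoaster

/-! ### Auxiliary lemmas -/

lemma IncrSlice.sub {A : ℕ → ℝ} {a b a' b' : ℕ} (h : IncrSlice A a b)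
    (ha : a ≤ a') (hb : b' ≤ b) : IncrSlice A a' b' :=
  fun t h1 h2 => h t (le_trans ha h1) (lt_of_lt_of_le h2 hb)

lemma DecrSlice.sub {A : ℕ → ℝ} {a b a' b' : ℕ} (h : DecrSlice A a b)
    (ha : a ≤ a') (hb : b' ≤ b) : DecrSlice A a' b' :=
  fun t h1 h2 => h t (le_trans ha h1) (lt_of_lt_of_le h2 hb)

lemma incr_neg {A : ℕ → ℝ} {a b : ℕ} :
    IncrSlice (fun u => -A u) a b ↔ DecrSlice A a b := by
  constructor <;> intro h t h1 h2 <;> have := h t h1 h2 <;> simpa using this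

lemma decr_neg {A : ℕ → ℝ} {a b : ℕ} :
    DecrSlice (fun u => -A u) a b ↔ IncrSlice A a b := by
  constructor <;> intro h t h1 h2 <;> have := h t h1 h2 <;> simpa using this

lemma mono_neg {A : ℕ → ℝ} {a b : ℕ} :
    MonoSlice (fun u => -A u) a b ↔ MonoSlice A a b := by
  unfold MonoSlice
  rw [incr_neg, decr_neg, or_comm]

lemma isRun_neg {m : ℕ} {A : ℕ → ℝ} {p q : ℕ} :
    IsRun m (fun u => -A u) p q ↔ IsRun m A p q := by
  unfold IsRun
  simp only [mono_neg]

/-- a single adjacent pair with distinct values is a monotone slice -/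
lemma mono_single {A : ℕ → ℝ} {u : ℕ} (h : A u ≠ A (u + 1)) :
    MonoSlice A u (u + 1) := by
  rcases lt_or_gt_of_ne h with h' | h'
  · left; intro t h1 h2
    have : t = u := by omega
    subst this; exact h'
  · right; intro t h1 h2
    have : t = u := by omega
    subst this; exact h'

/-- helper: strict monotonicity from consecutive increase -/
lemma strictmono_of_succ {g : ℕ → ℕ} {m : ℕ} (h : ∀ u, u + 1 < m → g u < g (u + 1)) :
    ∀ s t, s < t → t < m → g s < g t := by
  intro s t hst htm
  induction t with
  | zero => omega
  | succ t ih =>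
    rcases Nat.lt_or_ge s t with h' | h'
    · exact lt_trans (ih h' (by omega)) (h t (by omega))
    · have : s = t := by omega
      subst this; exact h s (by omega)

/-- helper: locate a point among increasing cut points -/
lemma locate {e : ℕ → ℕ} {M x : ℕ} (hinc : ∀ j, j < M → e j < e (j + 1))
    (h0 : e 0 ≤ x) (hM : x < e M) : ∃ j, j < M ∧ e j ≤ x ∧ x < e (j + 1) := by
  induction M with
  | zero => omega
  | succ M ih =>
    rcases Nat.lt_or_ge x (e M) with h' | h'
    · obtain ⟨j, hj, h1, h2⟩ := ih (fun j hj => hinc j (by omega)) h'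
      exact ⟨j, by omega, h1, h2⟩
    · exact ⟨M, by omega, h', hM⟩

lemma e_mono {e : ℕ → ℕ} {M : ℕ} (hinc : ∀ j, j < M → e j < e (j + 1)) :
    ∀ j1 j2, j1 < j2 → j2 ≤ M → e j1 < e j2 := by
  intro j1 j2 h12 h2M
  have := strictmono_of_succ (g := e) (m := M + 1) (fun u hu => hinc u (by omega))
  exact this j1 j2 h12 (by omega)

lemma e_mono_le {e : ℕ → ℕ} {M : ℕ} (hinc : ∀ j, j < M → e j < e (j + 1)) :
    ∀ j1 j2, j1 ≤ j2 → j2 ≤ M → e j1 ≤ e j2 := by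
  intro j1 j2 h12 h2M
  rcases Nat.eq_or_lt_of_le h12 with h | h
  · rw [h]
  · exact le_of_lt (e_mono hinc j1 j2 h h2M)


/-! ### Block certificates -/

structure BlockCert (k : ℕ) (B : ℕ → ℝ) (lo hi : ℕ) where
  M : ℕ
  e : ℕ → ℕ
  d : ℕ → Bool
  L : ℕ → ℕ
  R : ℕ → ℕ
  he0 : e 0 = lo
  heM : e M = hi
  hinc : ∀ j, j < M → e j < e (j + 1)
  halt : ∀ j, j + 1 < M → d (j + 1) = !d j
  hmono : ∀ j, j < M → (d j = true ∧ IncrSlice B (e j) (e (j + 1) - 1)) ∨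
      (d j = false ∧ DecrSlice B (e j) (e (j + 1) - 1))
  hLval : ∀ j, j < M → L j = 0 ∨ (L j = 1 ∧ 1 ≤ e j ∧
      ((d j = true ∧ B (e j - 1) < B (e j)) ∨ (d j = false ∧ B (e j) < B (e j - 1))))
  hRval : ∀ j, j < M → R j = 0 ∨ (R j = 1 ∧
      ((d j = true ∧ B (e (j + 1) - 1) < B (e (j + 1))) ∨
       (d j = false ∧ B (e (j + 1)) < B (e (j + 1) - 1))))
  hlen : ∀ j, j < M → k ≤ (e (j + 1) - e j) + L j + R j

/-- negating the sequence flips all directions of a certificate -/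
def BlockCert.neg {k : ℕ} {B : ℕ → ℝ} {lo hi : ℕ} (C : BlockCert k B lo hi) :
    BlockCert k (fun u => -B u) lo hi where
  M := C.M
  e := C.e
  d := fun j => !C.d j
  L := C.L
  R := C.R
  he0 := C.he0
  heM := C.heM
  hinc := C.hinc
  halt := by
    intro j hj
    have := C.halt j hj
    simp [this]
  hmono := by
    intro j hj
    rcases C.hmono j hj with ⟨hd, h⟩ | ⟨hd, h⟩
    · right; refine ⟨by simp [hd], ?_⟩
      intro u h1 h2; simpa using h u h1 h2
    · left; refine ⟨by simp [hd], ?_⟩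
      intro u h1 h2; simpa using h u h1 h2
  hLval := by
    intro j hj
    rcases C.hLval j hj with h | ⟨h1, h2, ⟨hd, h3⟩ | ⟨hd, h3⟩⟩
    · left; exact h
    · right; refine ⟨h1, h2, Or.inr ⟨by simp [hd], by simpa using h3⟩⟩
    · right; refine ⟨h1, h2, Or.inl ⟨by simp [hd], by simpa using h3⟩⟩
  hRval := by
    intro j hj
    rcases C.hRval j hj with h | ⟨h1, ⟨hd, h3⟩ | ⟨hd, h3⟩⟩
    · left; exact h
    · right; refine ⟨h1, Or.inr ⟨by simp [hd], by simpa using h3⟩⟩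
    · right; refine ⟨h1, Or.inl ⟨by simp [hd], by simpa using h3⟩⟩
  hlen := C.hlen

lemma cert_core {k m : ℕ} {B : ℕ → ℝ} (C : BlockCert k B 0 m)
    (hM : 1 ≤ C.M) (hRM : C.R (C.M - 1) = 0) :
    ∀ p q, p < q → q < m → IncrSlice B p q →
      (p = 0 ∨ ¬ MonoSlice B (p - 1) q) → (q + 1 = m ∨ ¬ MonoSlice B p (q + 1)) →
      k ≤ q + 1 - p := by
  intro p q hpq hqm hI hleft hright
  have hem : C.e C.M = m := C.heM
  have he0 : C.e 0 = 0 := C.he0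
  obtain ⟨j, hjM, hj1, hj2⟩ := locate C.hinc (by omega) (by omega : q < C.e C.M)
  have hejj : C.e j < C.e (j + 1) := C.hinc j hjM
  have hejm : C.e (j + 1) ≤ m := by
    have := e_mono_le C.hinc (j + 1) C.M (by omega) (le_refl _)
    omega
  rcases C.hmono j hjM with ⟨hd, hmon⟩ | ⟨hd, hmon⟩
  · -- increasing block containing q
    -- left extension point a
    have hLj : C.L j ≤ 1 := by
      rcases C.hLval j hjM with h | ⟨h, _⟩ <;> omega
    have key : ∃ a, a + C.L j ≤ C.e j ∧ C.e j ≤ a + 1 ∧ IncrSlice B a (C.e (j + 1) - 1) := by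
      by_cases hlam : 1 ≤ C.e j ∧ B (C.e j - 1) < B (C.e j)
      · refine ⟨C.e j - 1, by omega, by omega, ?_⟩
        intro u h1 h2
        rcases Nat.eq_or_lt_of_le h1 with h | h
        · have : u = C.e j - 1 := h.symm
          rw [this]
          have : C.e j - 1 + 1 = C.e j := by omega
          rw [this]; exact hlam.2
        · exact hmon u (by omega) h2
      · refine ⟨C.e j, ?_, by omega, hmon⟩
        rcases C.hLval j hjM with h | ⟨h1, h2, ⟨_, h3⟩ | ⟨hd', _⟩⟩
        · omega
        · exact absurd ⟨h2, h3⟩ hlam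
        · rw [hd] at hd'; exact absurd hd' (by simp)
    obtain ⟨a, ha1, ha2, hY⟩ := key
    by_cases hrho : j + 1 < C.M ∧ B (C.e (j + 1) - 1) < B (C.e (j + 1))
    · -- run must extend right: contradiction
      exfalso
      have hq1m : q + 1 < m := by
        have := e_mono C.hinc (j + 1) C.M hrho.1 (le_refl _)
        omega
      rcases hright with h | hnm
      · omega
      · apply hnm; left
        intro u h1 h2
        rcases Nat.lt_or_ge u q with h | h
        · exact hI u h1 h
        · have hu : u = q := by omega
          subst hu
          rcases Nat.lt_or_ge u (C.e (j + 1) - 1) with h' | h'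
          · exact hY u (by omega) h'
          · have : u = C.e (j + 1) - 1 := by omega
            rw [this]
            have h2' : C.e (j + 1) - 1 + 1 = C.e (j + 1) := by omega
            rw [h2']; exact hrho.2
    · -- no right extension: R j must be 0
      have hRj : C.R j = 0 := by
        rcases C.hRval j hjM with h | ⟨h1, ⟨_, h3⟩ | ⟨hd', _⟩⟩
        · exact h
        · -- favorable cmp: then j + 1 = M must hold, so j = M - 1
          rcases Nat.lt_or_ge (j + 1) C.M with hj' | hj'
          · exact absurd ⟨hj', h3⟩ hrho
          · have : j = C.M - 1 := by omega
            rw [this] at h1 ⊢; rw [hRM] at h1; omega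
        · rw [hd] at hd'; exact absurd hd' (by simp)
      have hpa : p ≤ a := by
        by_contra hc
        push_neg at hc
        rcases hleft with h0 | hnm
        · omega
        · exact hnm (Or.inl (hY.sub (by omega) (by omega)))
      have hq : q = C.e (j + 1) - 1 := by
        by_contra hc
        have hq' : q + 1 ≤ C.e (j + 1) - 1 := by omega
        rcases hright with h | hnm
        · omega
        · apply hnm; left
          intro u h1 h2
          rcases Nat.lt_or_ge u q with h | h
          · exact hI u h1 h
          · have hu : u = q := by omega
            subst hu
            exact hY u (by omega) (by omega)
      have := C.hlen j hjM
      omega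
  · -- decreasing block: q must be e j, use block j - 1
    have hqe : q = C.e j := by
      by_contra hc
      have h1 : C.e j ≤ q - 1 := by omega
      have h2 : q - 1 < C.e (j + 1) - 1 := by omega
      have := hmon (q - 1) h1 h2
      have h3 := hI (q - 1) (by omega) (by omega)
      have h4 : q - 1 + 1 = q := by omega
      rw [h4] at this h3
      linarith
    have hj1' : 1 ≤ j := by
      by_contra hc
      have : j = 0 := by omega
      subst this; omega
    have hdj1 : C.d (j - 1) = true := by
      have h := C.halt (j - 1) (by omega)
      rw [show j - 1 + 1 = j from by omega, hd] at h
      cases hcd : C.d (j - 1)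
      · rw [hcd] at h; simp at h
      · rfl
    have hjM1 : j - 1 < C.M := by omega
    rcases C.hmono (j - 1) hjM1 with ⟨_, hmon'⟩ | ⟨hd', _⟩
    swap
    · rw [hdj1] at hd'; exact absurd hd' (by simp)
    have hej1 : C.e (j - 1) < C.e j := by
      have := C.hinc (j - 1) hjM1
      have h2 : j - 1 + 1 = j := by omega
      rwa [h2] at this
    -- favorable step into e j
    have hfav : B (C.e j - 1) < B (C.e j) := by
      have h3 := hI (q - 1) (by omega) (by omega)
      rw [show q - 1 + 1 = q from by omega] at h3
      rw [hqe] at h3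
      exact h3
    have hLj : C.L (j - 1) ≤ 1 := by
      rcases C.hLval (j - 1) hjM1 with h | ⟨h, _⟩ <;> omega
    have hRj : C.R (j - 1) ≤ 1 := by
      rcases C.hRval (j - 1) hjM1 with h | ⟨h, _⟩ <;> omega
    have key : ∃ a, a + C.L (j - 1) ≤ C.e (j - 1) ∧ C.e (j - 1) ≤ a + 1 ∧
        IncrSlice B a (C.e j) := by
      have hmain : IncrSlice B (C.e (j - 1)) (C.e j) := by
        intro u h1 h2
        rcases Nat.lt_or_ge u (C.e j - 1) with h | h
        · have := hmon' u h1 (by rw [show j - 1 + 1 = j from by omega]; exact h)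
          exact this
        · have : u = C.e j - 1 := by omega
          rw [this, show C.e j - 1 + 1 = C.e j from by omega]
          exact hfav
      by_cases hlam : 1 ≤ C.e (j - 1) ∧ B (C.e (j - 1) - 1) < B (C.e (j - 1))
      · refine ⟨C.e (j - 1) - 1, by omega, by omega, ?_⟩
        intro u h1 h2
        rcases Nat.eq_or_lt_of_le h1 with h | h
        · rw [← h, show C.e (j-1) - 1 + 1 = C.e (j-1) from by omega]
          exact hlam.2
        · exact hmain u (by omega) h2
      · refine ⟨C.e (j - 1), ?_, by omega, hmain⟩
        rcases C.hLval (j - 1) hjM1 with h | ⟨h1, h2, ⟨_, h3⟩ | ⟨hd'', _⟩⟩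
        · omega
        · exact absurd ⟨h2, h3⟩ hlam
        · rw [hdj1] at hd''; exact absurd hd'' (by simp)
    obtain ⟨a, ha1, ha2, hY⟩ := key
    have hpa : p ≤ a := by
      by_contra hc
      push_neg at hc
      rcases hleft with h0 | hnm
      · omega
      · apply hnm; left
        exact hY.sub (by omega) (by omega)
    have hlen' := C.hlen (j - 1) hjM1
    rw [show j - 1 + 1 = j from by omega] at hlen'
    omega

theorem roller_of_cert {k m : ℕ} {B : ℕ → ℝ} (hk : 2 ≤ k)
    (hdist : ∀ u, u + 1 < m → B u ≠ B (u + 1))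
    (C : BlockCert k B 0 m) (hM : 1 ≤ C.M) (hRM : C.R (C.M - 1) = 0) :
    IsRollercoaster k m B := by
  have hm2 : 2 ≤ m := by
    by_contra hc
    push_neg at hc
    have h1 := C.hlen 0 (by omega)
    have hL0 : C.L 0 = 0 := by
      rcases C.hLval 0 (by omega) with h | ⟨_, h2, _⟩
      · exact h
      · rw [C.he0] at h2; omega
    have he1 : C.e (0 + 1) ≤ m := by
      have := e_mono_le C.hinc (0 + 1) C.M hM (le_refl _)
      rw [C.heM] at this; omega
    have hR0 : C.R 0 = 0 := by
      rcases Nat.eq_or_lt_of_le hM with h | h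
      · have h' := hRM
        rw [show C.M - 1 = 0 from by omega] at h'
        exact h'
      · exfalso
        have := e_mono C.hinc (0 + 1) C.M h (le_refl _)
        have h0 := C.hinc 0 (by omega)
        rw [C.heM] at this
        rw [C.he0] at h0
        omega
    have h0 := C.hinc 0 (by omega)
    rw [C.he0] at h0
    omega
  intro p q hrun
  obtain ⟨hpq, hqm, hmono, hleft, hright⟩ := hrun
  have hpq' : p < q := by
    rcases Nat.eq_or_lt_of_le hpq with h | h
    swap
    · exact h
    exfalso
    subst h
    rcases Nat.lt_or_ge (p + 1) m with h1 | h1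
    · -- can extend right
      rcases hright with h | hnm
      · omega
      · exact hnm (mono_single (hdist p h1))
    · -- p = m - 1 ≥ 1
      have hp1 : 1 ≤ p := by omega
      rcases hleft with h | hnm
      · omega
      · apply hnm
        have hne : B (p - 1) ≠ B (p - 1 + 1) := hdist (p - 1) (by omega)
        have hm := mono_single hne
        rwa [show p - 1 + 1 = p from by omega] at hm
  rcases hmono with hI | hD
  · exact cert_core C hM hRM p q hpq' hqm hI hleft hright
  · have := cert_core (C.neg) hM hRM p q hpq' hqm (incr_neg.mpr hD)
      (by rcases hleft with h | h; exact Or.inl h; exact Or.inr (fun hc => h (mono_neg.mp hc)))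
      (by rcases hright with h | h; exact Or.inl h; exact Or.inr (fun hc => h (mono_neg.mp hc)))
    exact this


/-! ### Certificate combinators -/

def BlockCert.empty (k : ℕ) (B : ℕ → ℝ) (lo : ℕ) : BlockCert k B lo lo where
  M := 0
  e := fun _ => lo
  d := fun _ => true
  L := fun _ => 0
  R := fun _ => 0
  he0 := rfl
  heM := rfl
  hinc := fun j hj => absurd hj (by omega)
  halt := fun j hj => absurd hj (by omega)
  hmono := fun j hj => absurd hj (by omega)
  hLval := fun j hj => absurd hj (by omega)
  hRval := fun j hj => absurd hj (by omega)
  hlen := fun j hj => absurd hj (by omega)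

def BlockCert.emptyEq (k : ℕ) (B : ℕ → ℝ) (lo hi : ℕ) (h : lo = hi) : BlockCert k B lo hi where
  M := 0
  e := fun _ => lo
  d := fun _ => true
  L := fun _ => 0
  R := fun _ => 0
  he0 := rfl
  heM := by rw [← h]
  hinc := fun j hj => absurd hj (by omega)
  halt := fun j hj => absurd hj (by omega)
  hmono := fun j hj => absurd hj (by omega)
  hLval := fun j hj => absurd hj (by omega)
  hRval := fun j hj => absurd hj (by omega)
  hlen := fun j hj => absurd hj (by omega)

def BlockCert.single {k : ℕ} {B : ℕ → ℝ} (lo hi : ℕ) (d0 : Bool) (L0 R0 : ℕ)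
    (hlohi : lo < hi)
    (hmono0 : d0 = true ∧ IncrSlice B lo (hi - 1) ∨ d0 = false ∧ DecrSlice B lo (hi - 1))
    (hL0 : L0 = 0 ∨ (L0 = 1 ∧ 1 ≤ lo ∧
      (d0 = true ∧ B (lo - 1) < B lo ∨ d0 = false ∧ B lo < B (lo - 1))))
    (hR0 : R0 = 0 ∨ (R0 = 1 ∧
      (d0 = true ∧ B (hi - 1) < B hi ∨ d0 = false ∧ B hi < B (hi - 1))))
    (hlen0 : k ≤ hi - lo + L0 + R0) : BlockCert k B lo hi where
  M := 1
  e := fun j => if j = 0 then lo else hi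
  d := fun _ => d0
  L := fun _ => L0
  R := fun _ => R0
  he0 := by simp
  heM := by simp
  hinc := by
    intro j hj
    have : j = 0 := by omega
    subst this
    simpa using hlohi
  halt := fun j hj => absurd hj (by omega)
  hmono := by
    intro j hj
    have : j = 0 := by omega
    subst this
    simpa using hmono0
  hLval := by
    intro j hj
    have : j = 0 := by omega
    subst this
    simpa using hL0
  hRval := by
    intro j hj
    have : j = 0 := by omega
    subst this
    simpa using hR0
  hlen := by
    intro j hj
    have : j = 0 := by omega
    subst this
    simpa using hlen0

def BlockCert.append {k : ℕ} {B : ℕ → ℝ} {lo mid hi : ℕ}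
    (C1 : BlockCert k B lo mid) (C2 : BlockCert k B mid hi)
    (hseam : C1.M = 0 ∨ C2.M = 0 ∨ C2.d 0 = !C1.d (C1.M - 1)) :
    BlockCert k B lo hi := by
  have hb : C1.e C1.M = C2.e 0 := by rw [C1.heM, C2.he0]
  refine ⟨C1.M + C2.M,
    (fun j => if j ≤ C1.M then C1.e j else C2.e (j - C1.M)),
    (fun j => if j < C1.M then C1.d j else C2.d (j - C1.M)),
    (fun j => if j < C1.M then C1.L j else C2.L (j - C1.M)),
    (fun j => if j < C1.M then C1.R j else C2.R (j - C1.M)),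
    ?_, ?_, ?_, ?_, ?_, ?_, ?_, ?_⟩
  case refine_1 =>
    simp only [if_pos (by omega : 0 ≤ C1.M)]
    exact C1.he0
  case refine_2 =>
    by_cases h : C2.M = 0
    · simp only [h, Nat.add_zero, if_pos (le_refl _)]
      rw [C1.heM]
      have := C2.heM
      rw [h, C2.he0] at this
      exact this
    · simp only [if_neg (by omega : ¬ C1.M + C2.M ≤ C1.M)]
      rw [show C1.M + C2.M - C1.M = C2.M from by omega]
      exact C2.heM
  case refine_3 =>
    intro j hj
    by_cases h : j < C1.M
    · simp only [if_pos (by omega : j ≤ C1.M), if_pos (by omega : j + 1 ≤ C1.M)]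
      exact C1.hinc j h
    · have h2 : ¬ j + 1 ≤ C1.M := by omega
      simp only [if_neg h2]
      have hej : (if j ≤ C1.M then C1.e j else C2.e (j - C1.M)) = C2.e (j - C1.M) := by
        by_cases h3 : j = C1.M
        · subst h3
          simp only [if_pos (le_refl _)]
          rw [hb, Nat.sub_self]
        · simp only [if_neg (by omega : ¬ j ≤ C1.M)]
      rw [hej, show j + 1 - C1.M = (j - C1.M) + 1 from by omega]
      exact C2.hinc (j - C1.M) (by omega)
  case refine_4 =>
    intro j hj
    by_cases h : j + 1 < C1.M
    · simp only [if_pos h, if_pos (by omega : j < C1.M)]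
      exact C1.halt j h
    · by_cases h2 : j < C1.M
      · have h3 : j + 1 = C1.M := by omega
        simp only [if_neg (by omega : ¬ j + 1 < C1.M), if_pos h2]
        rw [show j + 1 - C1.M = 0 from by omega]
        rcases hseam with hs | hs | hs
        · omega
        · omega
        · rw [hs, show C1.M - 1 = j from by omega]
      · simp only [if_neg (by omega : ¬ j + 1 < C1.M), if_neg h2]
        rw [show j + 1 - C1.M = (j - C1.M) + 1 from by omega]
        exact C2.halt (j - C1.M) (by omega)
  case refine_5 =>
    intro j hj
    by_cases h : j < C1.M
    · simp only [if_pos h, if_pos (by omega : j ≤ C1.M), if_pos (by omega : j + 1 ≤ C1.M)]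
      exact C1.hmono j h
    · have hej : (if j ≤ C1.M then C1.e j else C2.e (j - C1.M)) = C2.e (j - C1.M) := by
        by_cases h3 : j = C1.M
        · subst h3; simp only [if_pos (le_refl _)]; rw [hb, Nat.sub_self]
        · simp only [if_neg (by omega : ¬ j ≤ C1.M)]
      simp only [if_neg h, if_neg (by omega : ¬ j + 1 ≤ C1.M)]
      rw [hej, show j + 1 - C1.M = (j - C1.M) + 1 from by omega]
      exact C2.hmono (j - C1.M) (by omega)
  case refine_6 =>
    intro j hj
    by_cases h : j < C1.M
    · simp only [if_pos h, if_pos (by omega : j ≤ C1.M)]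
      exact C1.hLval j h
    · have hej : (if j ≤ C1.M then C1.e j else C2.e (j - C1.M)) = C2.e (j - C1.M) := by
        by_cases h3 : j = C1.M
        · subst h3; simp only [if_pos (le_refl _)]; rw [hb, Nat.sub_self]
        · simp only [if_neg (by omega : ¬ j ≤ C1.M)]
      simp only [if_neg h]
      rw [hej]
      exact C2.hLval (j - C1.M) (by omega)
  case refine_7 =>
    intro j hj
    by_cases h : j < C1.M
    · simp only [if_pos h, if_pos (by omega : j + 1 ≤ C1.M)]
      exact C1.hRval j h
    · simp only [if_neg h, if_neg (by omega : ¬ j + 1 ≤ C1.M)]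
      rw [show j + 1 - C1.M = (j - C1.M) + 1 from by omega]
      exact C2.hRval (j - C1.M) (by omega)
  case refine_8 =>
    intro j hj
    by_cases h : j < C1.M
    · simp only [if_pos h, if_pos (by omega : j ≤ C1.M), if_pos (by omega : j + 1 ≤ C1.M)]
      exact C1.hlen j h
    · have hej : (if j ≤ C1.M then C1.e j else C2.e (j - C1.M)) = C2.e (j - C1.M) := by
        by_cases h3 : j = C1.M
        · subst h3; simp only [if_pos (le_refl _)]; rw [hb, Nat.sub_self]
        · simp only [if_neg (by omega : ¬ j ≤ C1.M)]
      simp only [if_neg h, if_neg (by omega : ¬ j + 1 ≤ C1.M)]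
      rw [hej, show j + 1 - C1.M = (j - C1.M) + 1 from by omega]
      exact C2.hlen (j - C1.M) (by omega)


def BlockCert.shift {k : ℕ} {B1 : ℕ → ℝ} {lo hi : ℕ} (C : BlockCert k B1 lo hi)
    (B2 : ℕ → ℝ) (Δ : ℕ)
    (hagree : ∀ u, lo ≤ u → u < hi → B2 (u + Δ) = B1 u)
    (hfirst : C.L 0 = 0 ∨ (1 ≤ lo ∧ B2 (lo - 1 + Δ) = B1 (lo - 1)))
    (hlast : C.R (C.M - 1) = 0 ∨ B2 (hi + Δ) = B1 hi) :
    BlockCert k B2 (lo + Δ) (hi + Δ) := by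
  have hlo : ∀ j, j ≤ C.M → lo ≤ C.e j := by
    intro j hj
    have := e_mono_le C.hinc 0 j (by omega) hj
    rw [C.he0] at this; exact this
  have hhi : ∀ j, j ≤ C.M → C.e j ≤ hi := by
    intro j hj
    have := e_mono_le C.hinc j C.M hj (le_refl _)
    rw [C.heM] at this; exact this
  have hhis : ∀ j, j < C.M → C.e j < hi := by
    intro j hj
    have h1 := C.hinc j hj
    have h2 := hhi (j + 1) (by omega)
    omega
  refine ⟨C.M, fun j => C.e j + Δ, C.d, C.L, C.R,
    by rw [C.he0], by rw [C.heM],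
    ?_, C.halt, ?_, ?_, ?_, ?_⟩
  · intro j hj
    have := C.hinc j hj
    omega
  · -- hmono
    intro j hj
    have h1 := C.hinc j hj
    have h2 := hhi (j + 1) (by omega)
    have h0 := hlo j (by omega)
    have key : ∀ u, C.e j ≤ u → u < C.e (j + 1) - 1 →
        (B2 (u + Δ) = B1 u ∧ B2 (u + Δ + 1) = B1 (u + 1)) := by
      intro u hu1 hu2
      constructor
      · exact hagree u (by omega) (by omega)
      · rw [show u + Δ + 1 = (u + 1) + Δ from by omega]
        exact hagree (u + 1) (by omega) (by omega)
    rcases C.hmono j hj with ⟨hd, h⟩ | ⟨hd, h⟩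
    · refine Or.inl ⟨hd, ?_⟩
      intro u hu1 hu2
      obtain ⟨u', rfl⟩ : ∃ u', u = u' + Δ := ⟨u - Δ, by omega⟩
      obtain ⟨k1, k2⟩ := key u' (by omega) (by omega)
      rw [k1, k2]
      exact h u' (by omega) (by omega)
    · refine Or.inr ⟨hd, ?_⟩
      intro u hu1 hu2
      obtain ⟨u', rfl⟩ : ∃ u', u = u' + Δ := ⟨u - Δ, by omega⟩
      obtain ⟨k1, k2⟩ := key u' (by omega) (by omega)
      rw [k1, k2]
      exact h u' (by omega) (by omega)
  · -- hLval
    intro j hj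
    rcases C.hLval j hj with h | ⟨h1, h2, hcmp⟩
    · exact Or.inl h
    · refine Or.inr ⟨h1, by omega, ?_⟩
      have hej : B2 (C.e j + Δ) = B1 (C.e j) :=
        hagree _ (hlo j (by omega)) (hhis j hj)
      have hejm : B2 (C.e j + Δ - 1) = B1 (C.e j - 1) := by
        by_cases hj0 : j = 0
        · subst hj0
          rcases hfirst with h0 | ⟨hl1, hl2⟩
          · omega
          · rw [C.he0] at h2 ⊢
            rw [show lo + Δ - 1 = lo - 1 + Δ from by omega]
            exact hl2
        · have hlo' : lo ≤ C.e j - 1 := by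
            have h0 := hlo 0 (by omega)
            have := e_mono C.hinc 0 j (by omega) (by omega)
            rw [C.he0] at this
            omega
          rw [show C.e j + Δ - 1 = (C.e j - 1) + Δ from by omega]
          exact hagree _ hlo' (by have := hhis j hj; omega)
      rcases hcmp with ⟨hd, hc⟩ | ⟨hd, hc⟩
      · left
        refine ⟨hd, ?_⟩
        rw [hejm, hej]; exact hc
      · right
        refine ⟨hd, ?_⟩
        rw [hejm, hej]; exact hc
  · -- hRval
    intro j hj
    rcases C.hRval j hj with h | ⟨h1, hcmp⟩
    · exact Or.inl h
    · have h1' : 1 ≤ C.e (j + 1) := by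
        have h0 := hlo j (by omega)
        have := C.hinc j hj
        omega
      have hejm : B2 (C.e (j + 1) + Δ - 1) = B1 (C.e (j + 1) - 1) := by
        rw [show C.e (j + 1) + Δ - 1 = (C.e (j + 1) - 1) + Δ from by omega]
        refine hagree _ ?_ ?_
        · have := hlo j (by omega)
          have := C.hinc j hj
          omega
        · have := hhi (j + 1) (by omega)
          omega
      have hej : B2 (C.e (j + 1) + Δ) = B1 (C.e (j + 1)) := by
        by_cases hjM : j + 1 < C.M
        · exact hagree _ (hlo (j + 1) (by omega)) (hhis (j + 1) hjM)
        · have hjeq : j = C.M - 1 := by omega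
          rcases hlast with h0 | h0
          · rw [hjeq] at h1; omega
          · have heq : C.e (j + 1) = hi := by
              rw [show j + 1 = C.M from by omega]; exact C.heM
            rw [heq]; exact h0
      refine Or.inr ⟨h1, ?_⟩
      rcases hcmp with ⟨hd, hc⟩ | ⟨hd, hc⟩
      · left; refine ⟨hd, ?_⟩
        rw [hejm, hej]; exact hc
      · right; refine ⟨hd, ?_⟩
        rw [hejm, hej]; exact hc
  · -- hlen
    intro j hj
    have := C.hlen j hj
    have := C.hinc j hj
    omega


/-! ### projection lemmas -/

section proj
variable {k : ℕ} {B : ℕ → ℝ} {lo mid hi : ℕ}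

@[simp] lemma BlockCert.empty_M : (BlockCert.empty k B lo).M = 0 := rfl

@[simp] lemma BlockCert.emptyEq_M {h : lo = hi} : (BlockCert.emptyEq k B lo hi h).M = 0 := rfl
@[simp] lemma BlockCert.emptyEq_L {h : lo = hi} (j : ℕ) : (BlockCert.emptyEq k B lo hi h).L j = 0 := rfl
@[simp] lemma BlockCert.emptyEq_R {h : lo = hi} (j : ℕ) : (BlockCert.emptyEq k B lo hi h).R j = 0 := rfl
@[simp] lemma BlockCert.empty_L (j : ℕ) : (BlockCert.empty k B lo).L j = 0 := rfl
@[simp] lemma BlockCert.empty_R (j : ℕ) : (BlockCert.empty k B lo).R j = 0 := rfl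

variable {d0 : Bool} {L0 R0 : ℕ} {h1 h2 h3 h4 h5 : True}

@[simp] lemma BlockCert.single_M (hlohi hmono0 hL0 hR0 hlen0) :
    (BlockCert.single (k := k) (B := B) lo hi d0 L0 R0 hlohi hmono0 hL0 hR0 hlen0).M = 1 := rfl
@[simp] lemma BlockCert.single_d (hlohi hmono0 hL0 hR0 hlen0) (j : ℕ) :
    (BlockCert.single (k := k) (B := B) lo hi d0 L0 R0 hlohi hmono0 hL0 hR0 hlen0).d j = d0 := rfl
@[simp] lemma BlockCert.single_L (hlohi hmono0 hL0 hR0 hlen0) (j : ℕ) :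
    (BlockCert.single (k := k) (B := B) lo hi d0 L0 R0 hlohi hmono0 hL0 hR0 hlen0).L j = L0 := rfl
@[simp] lemma BlockCert.single_R (hlohi hmono0 hL0 hR0 hlen0) (j : ℕ) :
    (BlockCert.single (k := k) (B := B) lo hi d0 L0 R0 hlohi hmono0 hL0 hR0 hlen0).R j = R0 := rfl

@[simp] lemma BlockCert.append_M (C1 : BlockCert k B lo mid) (C2 : BlockCert k B mid hi) (hs) :
    (C1.append C2 hs).M = C1.M + C2.M := rfl
@[simp] lemma BlockCert.append_d (C1 : BlockCert k B lo mid) (C2 : BlockCert k B mid hi) (hs) (j : ℕ) :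
    (C1.append C2 hs).d j = if j < C1.M then C1.d j else C2.d (j - C1.M) := rfl
@[simp] lemma BlockCert.append_L (C1 : BlockCert k B lo mid) (C2 : BlockCert k B mid hi) (hs) (j : ℕ) :
    (C1.append C2 hs).L j = if j < C1.M then C1.L j else C2.L (j - C1.M) := rfl
@[simp] lemma BlockCert.append_R (C1 : BlockCert k B lo mid) (C2 : BlockCert k B mid hi) (hs) (j : ℕ) :
    (C1.append C2 hs).R j = if j < C1.M then C1.R j else C2.R (j - C1.M) := rfl

@[simp] lemma BlockCert.shift_M {B1 : ℕ → ℝ} (C : BlockCert k B1 lo hi) (B2 Δ ha hf hl) :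
    (C.shift B2 Δ ha hf hl).M = C.M := rfl
@[simp] lemma BlockCert.shift_d {B1 : ℕ → ℝ} (C : BlockCert k B1 lo hi) (B2 Δ ha hf hl) (j : ℕ) :
    (C.shift B2 Δ ha hf hl).d j = C.d j := rfl
@[simp] lemma BlockCert.shift_L {B1 : ℕ → ℝ} (C : BlockCert k B1 lo hi) (B2 Δ ha hf hl) (j : ℕ) :
    (C.shift B2 Δ ha hf hl).L j = C.L j := rfl
@[simp] lemma BlockCert.shift_R {B1 : ℕ → ℝ} (C : BlockCert k B1 lo hi) (B2 Δ ha hf hl) (j : ℕ) :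
    (C.shift B2 Δ ha hf hl).R j = C.R j := rfl

end proj

/-! ### peeling off neighbouring runs -/

lemma next_run_of_incr {m : ℕ} {B : ℕ → ℝ} {p q : ℕ}
    (hdist : ∀ u, u + 1 < m → B u ≠ B (u + 1))
    (h : IsRun m B p q) (hI : IncrSlice B p q) (hpq : p < q) (hq : q + 1 < m) :
    ∃ r, q < r ∧ r < m ∧ IsRun m B q r ∧ DecrSlice B q r := by
  classical
  obtain ⟨hle, hqm, hmono, hleft, hright⟩ := h
  have hstep : B (q + 1) < B q := by
    have hnm : ¬ MonoSlice B p (q + 1) := by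
      rcases hright with h' | h'
      · omega
      · exact h'
    have hne := hdist q hq
    rcases lt_or_gt_of_ne hne with h' | h'
    · exfalso
      apply hnm
      left
      intro u h1 h2
      rcases Nat.lt_or_ge u q with h3 | h3
      · exact hI u h1 h3
      · have : u = q := by omega
        subst this; exact h'
    · exact h'
  set P : ℕ → Prop := fun r => q < r ∧ DecrSlice B q r with hP
  have hP1 : P (q + 1) := by
    refine ⟨by omega, ?_⟩
    intro u h1 h2
    have : u = q := by omega
    subst this; exact hstep
  have hbound : q + 1 ≤ m - 1 := by omega
  set r := Nat.findGreatest P (m - 1) with hr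
  have hr1 : q + 1 ≤ r := Nat.le_findGreatest hbound hP1
  have hrspec : P r := Nat.findGreatest_spec (m := q + 1) (by omega) hP1
  have hrm : r ≤ m - 1 := Nat.findGreatest_le _
  refine ⟨r, by omega, by omega, ⟨by omega, by omega, Or.inr hrspec.2, ?_, ?_⟩, hrspec.2⟩
  · -- left maximality
    by_cases hq0 : q = 0
    · exact Or.inl hq0
    right
    intro hmono'
    rcases hmono' with h' | h'
    · have := h' q (by omega) (by omega)
      linarith
    · have h1 := h' (q - 1) (by omega) (by omega)
      have h2 := hI (q - 1) (by omega) (by omega)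
      rw [show q - 1 + 1 = q from by omega] at h1 h2
      linarith
  · -- right maximality
    rcases Nat.eq_or_lt_of_le hrm with h' | h'
    · left; omega
    right
    intro hmono'
    have hnP : ¬ P (r + 1) := Nat.findGreatest_is_greatest
      (show Nat.findGreatest P (m - 1) < r + 1 by omega) (show r + 1 ≤ m - 1 by omega)
    have hstepr : B r < B (r + 1) := by
      have hne := hdist r (by omega)
      rcases lt_or_gt_of_ne hne with h'' | h''
      · exact h''
      · exfalso
        apply hnP
        refine ⟨by omega, ?_⟩
        intro u h1 h2
        rcases Nat.lt_or_ge u r with h3 | h3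
        · exact hrspec.2 u h1 h3
        · have : u = r := by omega
          subst this; exact h''
    rcases hmono' with h'' | h''
    · have := h'' q (by omega) (by omega)
      linarith
    · have := h'' r (by omega) (by omega)
      linarith

lemma prev_run_of_incr {m : ℕ} {B : ℕ → ℝ} {p q : ℕ}
    (hdist : ∀ u, u + 1 < m → B u ≠ B (u + 1))
    (h : IsRun m B p q) (hI : IncrSlice B p q) (hpq : p < q) (hp : 1 ≤ p) :
    ∃ o, o < p ∧ IsRun m B o p ∧ DecrSlice B o p := by
  classical
  obtain ⟨hle, hqm, hmono, hleft, hright⟩ := h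
  have hstep : B p < B (p - 1) := by
    have hnm : ¬ MonoSlice B (p - 1) q := by
      rcases hleft with h' | h'
      · omega
      · exact h'
    have hne : B (p - 1) ≠ B p := by
      have := hdist (p - 1) (by omega)
      rwa [show p - 1 + 1 = p from by omega] at this
    rcases lt_or_gt_of_ne hne with h' | h'
    · exfalso
      apply hnm
      left
      intro u h1 h2
      rcases Nat.lt_or_ge u p with h3 | h3
      · have : u = p - 1 := by omega
        subst this
        rwa [show p - 1 + 1 = p from by omega]
      · exact hI u h3 h2
    · exact h'
  set P : ℕ → Prop := fun s => 0 < s ∧ DecrSlice B (p - s) p with hP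
  have hP1 : P 1 := by
    refine ⟨by omega, ?_⟩
    intro u h1 h2
    have : u = p - 1 := by omega
    subst this
    rw [show p - 1 + 1 = p from by omega]
    exact hstep
  set s0 := Nat.findGreatest P p with hs0
  have hs1 : 1 ≤ s0 := Nat.le_findGreatest hp hP1
  have hsspec : P s0 := Nat.findGreatest_spec (m := 1) (by omega) hP1
  have hsm : s0 ≤ p := Nat.findGreatest_le _
  set o := p - s0 with ho
  have hop : o < p := by omega
  refine ⟨o, hop, ⟨by omega, by omega, Or.inr hsspec.2, ?_, ?_⟩, hsspec.2⟩
  · -- left maximality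
    by_cases ho0 : o = 0
    · exact Or.inl ho0
    right
    intro hmono'
    have hnP : ¬ P (s0 + 1) := Nat.findGreatest_is_greatest
      (show Nat.findGreatest P p < s0 + 1 by omega) (show s0 + 1 ≤ p by omega)
    rcases hmono' with h' | h'
    · have h1 := h' (p - 1) (by omega) (by omega)
      rw [show p - 1 + 1 = p from by omega] at h1
      linarith
    · apply hnP
      refine ⟨by omega, ?_⟩
      have : p - (s0 + 1) = o - 1 := by omega
      rw [this]
      exact h'
  · -- right maximality
    right
    intro hmono'
    rcases hmono' with h' | h'
    · have h1 := h' (p - 1) (by omega) (by omega)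
      rw [show p - 1 + 1 = p from by omega] at h1
      linarith
    · have h1 := h' p (by omega) (by omega)
      have h2 := hI p (le_refl _) (by omega)
      linarith


lemma next_run_of_decr {m : ℕ} {B : ℕ → ℝ} {p q : ℕ}
    (hdist : ∀ u, u + 1 < m → B u ≠ B (u + 1))
    (h : IsRun m B p q) (hD : DecrSlice B p q) (hpq : p < q) (hq : q + 1 < m) :
    ∃ r, q < r ∧ r < m ∧ IsRun m B q r ∧ IncrSlice B q r := by
  have hdist' : ∀ u, u + 1 < m → (fun u => -B u) u ≠ (fun u => -B u) (u + 1) := by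
    intro u hu
    have := hdist u hu
    simpa using this
  obtain ⟨r, h1, h2, h3, h4⟩ := next_run_of_incr hdist' (isRun_neg.mpr h)
    (incr_neg.mpr hD) hpq hq
  exact ⟨r, h1, h2, isRun_neg.mp h3, decr_neg.mp h4⟩

lemma prev_run_of_decr {m : ℕ} {B : ℕ → ℝ} {p q : ℕ}
    (hdist : ∀ u, u + 1 < m → B u ≠ B (u + 1))
    (h : IsRun m B p q) (hD : DecrSlice B p q) (hpq : p < q) (hp : 1 ≤ p) :
    ∃ o, o < p ∧ IsRun m B o p ∧ IncrSlice B o p := by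
  have hdist' : ∀ u, u + 1 < m → (fun u => -B u) u ≠ (fun u => -B u) (u + 1) := by
    intro u hu
    have := hdist u hu
    simpa using this
  obtain ⟨o, h1, h2, h3⟩ := prev_run_of_incr hdist' (isRun_neg.mpr h)
    (incr_neg.mpr hD) hpq hp
  exact ⟨o, h1, isRun_neg.mp h2, decr_neg.mp h3⟩

/-! ### block decomposition of a rollercoaster to the left / right of a run -/

lemma left_blocks {k m : ℕ} {B : ℕ → ℝ} (hk : 3 ≤ k)
    (hdist : ∀ u, u + 1 < m → B u ≠ B (u + 1))
    (hroll : IsRollercoaster k m B) :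
    ∀ p q δ, IsRun m B p q →
      ((δ = true ∧ IncrSlice B p q) ∨ (δ = false ∧ DecrSlice B p q)) →
      ∃ C : BlockCert k B 0 p, (1 ≤ C.M → C.d (C.M - 1) = !δ) ∧ (∀ j, C.L j = 0) := by
  intro p
  induction p using Nat.strong_induction_on with
  | _ p ih =>
    intro q δ hrun hdir
    by_cases hp0 : p = 0
    · subst hp0
      refine ⟨BlockCert.empty k B 0, ?_, fun j => rfl⟩
      intro h
      rw [BlockCert.empty_M] at h
      omega
    · have hlen := hroll p q hrun
      have hpq : p < q := by omega
      rcases hdir with ⟨hδ, hI⟩ | ⟨hδ, hD⟩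
      · subst hδ
        obtain ⟨o, ho, hrun', hD'⟩ := prev_run_of_incr hdist hrun hI hpq (by omega)
        obtain ⟨C0, hd0, hL0⟩ := ih o (by omega) p false hrun' (Or.inr ⟨rfl, hD'⟩)
        have hlen' := hroll o p hrun'
        have hstep : B p < B (p - 1) := by
          have := hD' (p - 1) (by omega) (by omega)
          rwa [show p - 1 + 1 = p from by omega] at this
        set Cb := BlockCert.single (k := k) (B := B) o p false 0 1 ho
            (Or.inr ⟨rfl, hD'.sub (le_refl o) (by omega)⟩)
            (Or.inl rfl)
            (Or.inr ⟨rfl, Or.inr ⟨rfl, hstep⟩⟩)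
            (by omega) with hCb
        have hseam : C0.M = 0 ∨ Cb.M = 0 ∨ Cb.d 0 = !C0.d (C0.M - 1) := by
          by_cases h0 : C0.M = 0
          · exact Or.inl h0
          · right; right
            rw [hCb, BlockCert.single_d, hd0 (by omega)]
            simp
        refine ⟨C0.append Cb hseam, ?_, ?_⟩
        · intro _
          rw [BlockCert.append_d]
          rw [BlockCert.append_M, hCb, BlockCert.single_M]
          rw [if_neg (by omega : ¬ C0.M + 1 - 1 < C0.M)]
          rw [BlockCert.single_d]
          simp
        · intro j
          rw [BlockCert.append_L]
          by_cases h0 : j < C0.M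
          · rw [if_pos h0]; exact hL0 j
          · rw [if_neg h0, hCb, BlockCert.single_L]
      · subst hδ
        obtain ⟨o, ho, hrun', hI'⟩ := prev_run_of_decr hdist hrun hD hpq (by omega)
        obtain ⟨C0, hd0, hL0⟩ := ih o (by omega) p true hrun' (Or.inl ⟨rfl, hI'⟩)
        have hlen' := hroll o p hrun'
        have hstep : B (p - 1) < B p := by
          have := hI' (p - 1) (by omega) (by omega)
          rwa [show p - 1 + 1 = p from by omega] at this
        set Cb := BlockCert.single (k := k) (B := B) o p true 0 1 ho
            (Or.inl ⟨rfl, hI'.sub (le_refl o) (by omega)⟩)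
            (Or.inl rfl)
            (Or.inr ⟨rfl, Or.inl ⟨rfl, hstep⟩⟩)
            (by omega) with hCb
        have hseam : C0.M = 0 ∨ Cb.M = 0 ∨ Cb.d 0 = !C0.d (C0.M - 1) := by
          by_cases h0 : C0.M = 0
          · exact Or.inl h0
          · right; right
            rw [hCb, BlockCert.single_d, hd0 (by omega)]
            simp
        refine ⟨C0.append Cb hseam, ?_, ?_⟩
        · intro _
          rw [BlockCert.append_d]
          rw [BlockCert.append_M, hCb, BlockCert.single_M]
          rw [if_neg (by omega : ¬ C0.M + 1 - 1 < C0.M)]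
          rw [BlockCert.single_d]
          simp
        · intro j
          rw [BlockCert.append_L]
          by_cases h0 : j < C0.M
          · rw [if_pos h0]; exact hL0 j
          · rw [if_neg h0, hCb, BlockCert.single_L]

lemma right_blocks {k m : ℕ} {B : ℕ → ℝ} (hk : 3 ≤ k)
    (hdist : ∀ u, u + 1 < m → B u ≠ B (u + 1))
    (hroll : IsRollercoaster k m B) :
    ∀ fuel p q δ, m - q ≤ fuel → IsRun m B p q →
      ((δ = true ∧ IncrSlice B p q) ∨ (δ = false ∧ DecrSlice B p q)) →
      ∃ C : BlockCert k B (q + 1) m, (1 ≤ C.M → C.d 0 = !δ) ∧ (∀ j, C.R j = 0) := by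
  intro fuel
  induction fuel with
  | zero =>
    intro p q δ hf hrun _
    have := hrun.2.1
    omega
  | succ fuel ih =>
    intro p q δ hf hrun hdir
    by_cases hq1 : q + 1 = m
    · refine ⟨BlockCert.emptyEq k B (q + 1) m hq1, ?_, fun j => rfl⟩
      intro h
      rw [BlockCert.emptyEq_M] at h
      omega
    · have hlen := hroll p q hrun
      have hqm : q < m := hrun.2.1
      have hpq : p < q := by omega
      rcases hdir with ⟨hδ, hI⟩ | ⟨hδ, hD⟩
      · subst hδ
        obtain ⟨r, hr1, hr2, hrun', hD'⟩ := next_run_of_incr hdist hrun hI hpq (by omega)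
        have hlen' := hroll q r hrun'
        have hstep : B (q + 1) < B q := hD' q (le_refl _) (by omega)
        obtain ⟨C2, hd2, hR2⟩ := ih q r false (by omega) hrun' (Or.inr ⟨rfl, hD'⟩)
        set Cb := BlockCert.single (k := k) (B := B) (q + 1) (r + 1) false 1 0 (by omega)
            (Or.inr ⟨rfl, hD'.sub (by omega) (by omega)⟩)
            (Or.inr ⟨rfl, by omega, Or.inr ⟨rfl, hstep⟩⟩)
            (Or.inl rfl)
            (by omega) with hCb
        have hseam : Cb.M = 0 ∨ C2.M = 0 ∨ C2.d 0 = !Cb.d (Cb.M - 1) := by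
          by_cases h0 : C2.M = 0
          · exact Or.inr (Or.inl h0)
          · right; right
            rw [hd2 (by omega), hCb, BlockCert.single_d]
        refine ⟨Cb.append C2 hseam, ?_, ?_⟩
        · intro _
          rw [BlockCert.append_d, if_pos (by rw [hCb, BlockCert.single_M]; omega),
            hCb, BlockCert.single_d]
          rfl
        · intro j
          rw [BlockCert.append_R]
          by_cases h0 : j < Cb.M
          · rw [if_pos h0, hCb, BlockCert.single_R]
          · rw [if_neg h0]; exact hR2 _
      · subst hδ
        obtain ⟨r, hr1, hr2, hrun', hI'⟩ := next_run_of_decr hdist hrun hD hpq (by omega)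
        have hlen' := hroll q r hrun'
        have hstep : B q < B (q + 1) := hI' q (le_refl _) (by omega)
        obtain ⟨C2, hd2, hR2⟩ := ih q r true (by omega) hrun' (Or.inl ⟨rfl, hI'⟩)
        set Cb := BlockCert.single (k := k) (B := B) (q + 1) (r + 1) true 1 0 (by omega)
            (Or.inl ⟨rfl, hI'.sub (by omega) (by omega)⟩)
            (Or.inr ⟨rfl, by omega, Or.inl ⟨rfl, hstep⟩⟩)
            (Or.inl rfl)
            (by omega) with hCb
        have hseam : Cb.M = 0 ∨ C2.M = 0 ∨ C2.d 0 = !Cb.d (Cb.M - 1) := by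
          by_cases h0 : C2.M = 0
          · exact Or.inr (Or.inl h0)
          · right; right
            rw [hd2 (by omega), hCb, BlockCert.single_d]
        refine ⟨Cb.append C2 hseam, ?_, ?_⟩
        · intro _
          rw [BlockCert.append_d, if_pos (by rw [hCb, BlockCert.single_M]; omega),
            hCb, BlockCert.single_d]
          rfl
        · intro j
          rw [BlockCert.append_R]
          by_cases h0 : j < Cb.M
          · rw [if_pos h0, hCb, BlockCert.single_R]
          · rw [if_neg h0]; exact hR2 _


def BlockCert.cast {k : ℕ} {B : ℕ → ℝ} {lo hi lo' hi' : ℕ} (C : BlockCert k B lo hi)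
    (h1 : lo = lo') (h2 : hi = hi') : BlockCert k B lo' hi' :=
  ⟨C.M, C.e, C.d, C.L, C.R, by rw [C.he0, h1], by rw [C.heM, h2],
    C.hinc, C.halt, C.hmono, C.hLval, C.hRval, C.hlen⟩

@[simp] lemma BlockCert.cast_M {k : ℕ} {B : ℕ → ℝ} {lo hi lo' hi' : ℕ}
    (C : BlockCert k B lo hi) (h1 : lo = lo') (h2 : hi = hi') :
    (C.cast h1 h2).M = C.M := rfl
@[simp] lemma BlockCert.cast_d {k : ℕ} {B : ℕ → ℝ} {lo hi lo' hi' : ℕ}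
    (C : BlockCert k B lo hi) (h1 : lo = lo') (h2 : hi = hi') (j : ℕ) :
    (C.cast h1 h2).d j = C.d j := rfl
@[simp] lemma BlockCert.cast_L {k : ℕ} {B : ℕ → ℝ} {lo hi lo' hi' : ℕ}
    (C : BlockCert k B lo hi) (h1 : lo = lo') (h2 : hi = hi') (j : ℕ) :
    (C.cast h1 h2).L j = C.L j := rfl
@[simp] lemma BlockCert.cast_R {k : ℕ} {B : ℕ → ℝ} {lo hi lo' hi' : ℕ}
    (C : BlockCert k B lo hi) (h1 : lo = lo') (h2 : hi = hi') (j : ℕ) :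
    (C.cast h1 h2).R j = C.R j := rfl

/-! ### extracting monotone subsequences from LIS/LDS values -/

lemma subseq_bound {a b mm : ℕ} {u : ℕ → ℕ} (h : IsSubseqIdx a b mm u) : mm ≤ b - a := by
  rcases Nat.eq_zero_or_pos mm with h0 | h0
  · omega
  · have hgrow : ∀ s, s < mm → a + s ≤ u s := by
      intro s
      induction s with
      | zero =>
        intro hs
        have := (h.1 0 hs).1
        omega
      | succ s ihs =>
        intro hs
        have h1 := ihs (by omega)
        have h2 := h.2 s (s + 1) (by omega) hs
        omega
    have h1 := hgrow (mm - 1) (by omega)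
    have h2 := (h.1 (mm - 1) (by omega)).2
    omega

lemma lis_exists {S : ℕ → ℝ} {a b kv : ℕ} (h : LIS S a b = kv) :
    ∃ u : ℕ → ℕ, IsSubseqIdx a b kv u ∧ ∀ s t, s < t → t < kv → S (u s) < S (u t) := by
  have hmem : kv ∈ {mm | ∃ idx : ℕ → ℕ, IsSubseqIdx a b mm idx ∧
      ∀ s t, s < t → t < mm → S (idx s) < S (idx t)} := by
    rw [← h]
    apply Nat.sSup_mem
    · refine ⟨0, fun _ => a, ⟨?_, ?_⟩, ?_⟩
      · intro s hs; omega
      · intro s t hst ht; omega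
      · intro s t hst ht; omega
    · refine ⟨b - a, ?_⟩
      rintro mm ⟨u, hu, _⟩
      exact subseq_bound hu
  exact hmem

lemma lds_exists {S : ℕ → ℝ} {a b kv : ℕ} (h : LDS S a b = kv) :
    ∃ u : ℕ → ℕ, IsSubseqIdx a b kv u ∧ ∀ s t, s < t → t < kv → S (u t) < S (u s) := by
  have hmem : kv ∈ {mm | ∃ idx : ℕ → ℕ, IsSubseqIdx a b mm idx ∧
      ∀ s t, s < t → t < mm → S (idx t) < S (idx s)} := by
    rw [← h]
    apply Nat.sSup_mem
    · refine ⟨0, fun _ => a, ⟨?_, ?_⟩, ?_⟩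
      · intro s hs; omega
      · intro s t hst ht; omega
      · intro s t hst ht; omega
    · refine ⟨b - a, ?_⟩
      rintro mm ⟨u, hu, _⟩
      exact subseq_bound hu
  exact hmem

lemma subseq_of_consec {n m' : ℕ} {g : ℕ → ℕ} (hb : ∀ u, u < m' → g u < n)
    (hc : ∀ u, u + 1 < m' → g u < g (u + 1)) : IsSubseqIdx 0 n m' g :=
  ⟨fun s hs => ⟨by omega, hb s hs⟩, strictmono_of_succ hc⟩

lemma single_ex {k : ℕ} {B : ℕ → ℝ} (lo hi : ℕ) (d0 : Bool) (L0 R0 : ℕ)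
    (hlohi : lo < hi)
    (hmono0 : d0 = true ∧ IncrSlice B lo (hi - 1) ∨ d0 = false ∧ DecrSlice B lo (hi - 1))
    (hL0 : L0 = 0 ∨ (L0 = 1 ∧ 1 ≤ lo ∧
      (d0 = true ∧ B (lo - 1) < B lo ∨ d0 = false ∧ B lo < B (lo - 1))))
    (hR0 : R0 = 0 ∨ (R0 = 1 ∧
      (d0 = true ∧ B (hi - 1) < B hi ∨ d0 = false ∧ B hi < B (hi - 1))))
    (hlen0 : k ≤ hi - lo + L0 + R0) :
    ∃ C : BlockCert k B lo hi, C.M = 1 ∧ (∀ j, C.d j = d0) ∧ (∀ j, C.L j = L0) ∧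
      (∀ j, C.R j = R0) :=
  ⟨BlockCert.single lo hi d0 L0 R0 hlohi hmono0 hL0 hR0 hlen0, rfl,
    fun _ => rfl, fun _ => rfl, fun _ => rfl⟩

lemma append_ex {k : ℕ} {B : ℕ → ℝ} {lo mid hi : ℕ}
    (C1 : BlockCert k B lo mid) (C2 : BlockCert k B mid hi)
    (hseam : C1.M = 0 ∨ C2.M = 0 ∨ C2.d 0 = !C1.d (C1.M - 1)) :
    ∃ C : BlockCert k B lo hi, C.M = C1.M + C2.M ∧
      (∀ j, C.d j = if j < C1.M then C1.d j else C2.d (j - C1.M)) ∧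
      (∀ j, C.L j = if j < C1.M then C1.L j else C2.L (j - C1.M)) ∧
      (∀ j, C.R j = if j < C1.M then C1.R j else C2.R (j - C1.M)) :=
  ⟨C1.append C2 hseam, rfl, fun _ => rfl, fun _ => rfl, fun _ => rfl⟩

lemma shift_ex {k : ℕ} {B1 : ℕ → ℝ} {lo hi : ℕ} (C : BlockCert k B1 lo hi)
    (B2 : ℕ → ℝ) (Δ : ℕ) (lo' hi' : ℕ) (h1 : lo + Δ = lo') (h2 : hi + Δ = hi')
    (hagree : ∀ u, lo ≤ u → u < hi → B2 (u + Δ) = B1 u)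
    (hfirst : C.L 0 = 0 ∨ (1 ≤ lo ∧ B2 (lo - 1 + Δ) = B1 (lo - 1)))
    (hlast : C.R (C.M - 1) = 0 ∨ B2 (hi + Δ) = B1 hi) :
    ∃ C' : BlockCert k B2 lo' hi', C'.M = C.M ∧ (∀ j, C'.d j = C.d j) ∧
      (∀ j, C'.L j = C.L j) ∧ (∀ j, C'.R j = C.R j) :=
  ⟨(C.shift B2 Δ hagree hfirst hlast).cast h1 h2, rfl, fun _ => rfl, fun _ => rfl, fun _ => rfl⟩

lemma distinct_of_subseq {S : ℕ → ℝ} {n m' : ℕ} {g : ℕ → ℕ} (hS : DistinctOn n S)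
    (h : IsSubseqIdx 0 n m' g) :
    ∀ u, u + 1 < m' → S (g u) ≠ S (g (u + 1)) := by
  intro u hu heq
  have h1 := (h.1 u (by omega)).2
  have h2 := (h.1 (u + 1) hu).2
  have h3 := hS _ _ h1 h2 heq
  have h4 := h.2 u (u + 1) (by omega) hu
  omega


set_option maxHeartbeats 2000000 in
/-- If `x = S (idx t)` is a non-first element of an increasing run of a longest
`k`-rollercoaster `A` in `S`, `y = S (idx (t-1))` is its predecessor in that run, and `x`
lies in the part `S_i` of an alternating `k`-decomposition, then `y` lies in one of the
parts `S_{i-4}, S_{i-3}, S_{i-2}, S_{i-1}, S_i`. -/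
theorem stmt2 (k n : ℕ) (hk : 3 ≤ k) (S : ℕ → ℝ) (hS : DistinctOn n S)
    (m : ℕ) (c : ℕ → ℕ) (hdec : IsAltDecomp k S n m c)
    (mA : ℕ) (idx : ℕ → ℕ) (hsub : IsSubseqIdx 0 n mA idx)
    (hroll : IsRollercoaster k mA (fun t => S (idx t)))
    (hmax : ∀ (m' : ℕ) (idx' : ℕ → ℕ), IsSubseqIdx 0 n m' idx' →
      IsRollercoaster k m' (fun t => S (idx' t)) → m' ≤ mA)
    (p q t : ℕ)
    (hrun : IsRun mA (fun u => S (idx u)) p q)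
    (hinc : IncrSlice (fun u => S (idx u)) p q)
    (hpt : p < t) (htq : t ≤ q)
    (i : ℕ) (hi1 : 1 ≤ i) (him : i ≤ m)
    (hx1 : c (i - 1) ≤ idx t) (hx2 : idx t < c i) :
    ∃ a, 1 ≤ a ∧ i - 4 ≤ a ∧ a ≤ i ∧ c (a - 1) ≤ idx (t - 1) ∧ idx (t - 1) < c a := by
  classical
  obtain ⟨hc0, hcm, hcinc, hparts, _⟩ := hdec
  have hcle : ∀ l1 l2, l1 ≤ l2 → l2 ≤ m → c l1 ≤ c l2 :=
    fun l1 l2 h1 h2 => e_mono_le hcinc l1 l2 h1 h2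
  have hrunlen := hroll p q hrun
  have hqmA : q < mA := hrun.2.1
  have hjn : idx (t - 1) < n := (hsub.1 (t - 1) (by omega)).2
  have hjj' : idx (t - 1) < idx t := hsub.2 (t - 1) t (by omega) (by omega)
  obtain ⟨a0, ha0m, ha1, ha2⟩ := locate (e := c) (M := m) hcinc (by omega)
    (by rw [hcm]; exact hjn)
  by_cases hcase : i ≤ a0 + 5
  · refine ⟨a0 + 1, by omega, by omega, ?_, by simpa using ha1, by simpa using ha2⟩
    by_contra hcon
    push_neg at hcon
    have : c i ≤ c a0 := hcle i a0 (by omega) (by omega)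
    omega
  · exfalso
    push_neg at hcase
    set α := if (a0 + 2) % 2 = 1 then a0 + 2 else a0 + 3 with hα
    have hαf : (a0 + 2 ≤ α ∧ α ≤ a0 + 3) ∧ α % 2 = 1 := by
      by_cases hpar : (a0 + 2) % 2 = 1
      · rw [hα, if_pos hpar]; omega
      · rw [hα, if_neg hpar]; omega
    have hs1 := (hparts α (by omega) (by omega)).1
    have hs2 := (hparts (α + 1) (by omega) (by omega)).1
    have hs3 := (hparts (α + 2) (by omega) (by omega)).1
    unfold partStat at hs1 hs2 hs3
    rw [if_pos hαf.2] at hs1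
    rw [if_neg (by omega)] at hs2
    rw [if_pos (by omega)] at hs3
    rw [show α + 1 - 1 = α from rfl] at hs2
    rw [show α + 2 - 1 = α + 1 from rfl] at hs3
    obtain ⟨u1, hu1sub, hu1val⟩ := lis_exists hs1
    obtain ⟨v, hvsub, hvval⟩ := lds_exists hs2
    obtain ⟨u2, hu2sub, hu2val⟩ := lis_exists hs3
    -- position facts
    have hyu1 : ∀ s, s < k → idx (t - 1) < u1 s := by
      intro s hs
      have h1 := (hu1sub.1 s hs).1
      have h2 : c (a0 + 1) ≤ c (α - 1) := hcle _ _ (by omega) (by omega)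
      omega
    have hyv : ∀ s, s < k → idx (t - 1) < v s := by
      intro s hs
      have h1 := (hvsub.1 s hs).1
      have h2 : c (a0 + 1) ≤ c α := hcle _ _ (by omega) (by omega)
      omega
    have hu1v : ∀ s s', s < k → s' < k → u1 s < v s' := by
      intro s s' hs hs'
      have h1 := (hu1sub.1 s hs).2
      have h2 := (hvsub.1 s' hs').1
      omega
    have hvu2 : ∀ s s', s < k → s' < k → v s < u2 s' := by
      intro s s' hs hs'
      have h1 := (hvsub.1 s hs).2
      have h2 := (hu2sub.1 s' hs').1
      omega
    have hu2x : ∀ s, s < k → u2 s < idx t := by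
      intro s hs
      have h1 := (hu2sub.1 s hs).2
      have h2 : c (α + 2) ≤ c (i - 1) := hcle _ _ (by omega) (by omega)
      omega
    have hvx : ∀ s, s < k → v s < idx t := by
      intro s hs
      have h1 := (hvsub.1 s hs).2
      have h2 : c (α + 1) ≤ c (i - 1) := hcle _ _ (by omega) (by omega)
      omega
    have hvn : ∀ s, s < k → v s < n := by
      intro s hs
      have h1 := (hvsub.1 s hs).2
      have h2 : c (α + 1) ≤ c m := hcle _ _ (by omega) (le_refl _)
      omega
    have hu1n : ∀ s, s < k → u1 s < n := by
      intro s hs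
      have := hu1v s s hs hs
      have := hvn s hs
      omega
    have hu2n : ∀ s, s < k → u2 s < n := by
      intro s hs
      have h1 := (hu2sub.1 s hs).2
      have h2 : c (α + 2) ≤ c m := hcle _ _ (by omega) (le_refl _)
      omega
    have hdistA : ∀ u, u + 1 < mA → S (idx u) ≠ S (idx (u + 1)) :=
      distinct_of_subseq hS hsub
    have hidxn : ∀ u, u < mA → idx u < n := fun u hu => (hsub.1 u hu).2
    have hidxle : ∀ a b, a ≤ b → b < mA → idx a ≤ idx b := by
      intro a b hab hb
      rcases Nat.eq_or_lt_of_le hab with h | h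
      · rw [h]
      · exact le_of_lt (hsub.2 a b h hb)
    -- case analysis on lengths of the partial run pieces
    rcases Nat.lt_or_ge (t - p) k with hf | hf
    · rcases Nat.lt_or_ge (q + 1 - t) k with hb | hb
      · -- CASE VW : cut both sides, insert I1, D, I2
        have hleftcut : ∃ KP, ∃ CLc : BlockCert k (fun u => S (idx u)) 0 KP,
            p ≤ KP ∧ KP ≤ p + 1 ∧ (1 ≤ CLc.M → CLc.d (CLc.M - 1) = false) ∧
            (∀ j, CLc.L j = 0) ∧ CLc.R (CLc.M - 1) = 0 := by
          by_cases hp1 : p = 0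
          · refine ⟨0, BlockCert.empty k _ 0, by omega, by omega, ?_, fun j => rfl, rfl⟩
            intro h
            rw [BlockCert.empty_M] at h
            omega
          · obtain ⟨o, ho, hrun2, hD2⟩ := prev_run_of_incr hdistA hrun hinc (by omega) (by omega)
            obtain ⟨C0, hC0d, hC0L⟩ := left_blocks hk hdistA hroll o p false hrun2
              (Or.inr ⟨rfl, hD2⟩)
            have hlenl := hroll o p hrun2
            obtain ⟨Cp, hCpM, hCpd, hCpL, hCpR⟩ := single_ex (k := k)
              (B := fun u => S (idx u)) o (p + 1) false 0 0 (by omega)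
              (Or.inr ⟨rfl, hD2.sub (le_refl o) (by omega)⟩)
              (Or.inl rfl) (Or.inl rfl) (by omega)
            obtain ⟨CLc, hM, hd, hL, hR⟩ := append_ex C0 Cp (by
              by_cases h0 : C0.M = 0
              · exact Or.inl h0
              · right; right
                rw [hCpd 0, hC0d (by omega)]
                rfl)
            refine ⟨p + 1, CLc, by omega, by omega, ?_, ?_, ?_⟩
            · intro _
              rw [hd, if_neg (by omega)]
              exact hCpd _
            · intro j
              rw [hL]
              by_cases h0 : j < C0.M
              · rw [if_pos h0]; exact hC0L j
              · rw [if_neg h0]; exact hCpL _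
            · rw [hR, if_neg (by omega)]
              exact hCpR _
        obtain ⟨KP, CLc, hKPa, hKPb, hCLcd, hCLcL, hCLcR⟩ := hleftcut
        have hrightcut : ∃ T0, ∃ CRc : BlockCert k (fun u => S (idx u)) T0 mA,
            q ≤ T0 ∧ T0 ≤ q + 1 ∧ (1 ≤ CRc.M → CRc.d 0 = false) ∧
            (∀ j, CRc.R j = 0) ∧ CRc.L 0 = 0 := by
          by_cases hq1 : q + 1 = mA
          · refine ⟨mA, BlockCert.emptyEq k _ mA mA rfl, by omega, by omega, ?_,
              fun j => rfl, rfl⟩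
            intro h
            rw [BlockCert.emptyEq_M] at h
            omega
          · obtain ⟨r, hr1, hr2, hrun2, hD2⟩ := next_run_of_incr hdistA hrun hinc
              (by omega) (by omega)
            obtain ⟨CR2, hCR2d, hCR2R⟩ := right_blocks hk hdistA hroll mA q r false
              (by omega) hrun2 (Or.inr ⟨rfl, hD2⟩)
            have hlenr := hroll q r hrun2
            obtain ⟨Cq, hCqM, hCqd, hCqL, hCqR⟩ := single_ex (k := k)
              (B := fun u => S (idx u)) q (r + 1) false 0 0 (by omega)
              (Or.inr ⟨rfl, hD2.sub (le_refl q) (by omega)⟩)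
              (Or.inl rfl) (Or.inl rfl) (by omega)
            obtain ⟨CRc, hM, hd, hL, hR⟩ := append_ex Cq CR2 (by
              by_cases h0 : CR2.M = 0
              · exact Or.inr (Or.inl h0)
              · right; right
                rw [hCR2d (by omega), hCqd])
            refine ⟨q, CRc, le_refl _, by omega, ?_, ?_, ?_⟩
            · intro _
              rw [hd, if_pos (by omega)]
              exact hCqd _
            · intro j
              rw [hR]
              by_cases h0 : j < Cq.M
              · rw [if_pos h0]; exact hCqR _
              · rw [if_neg h0]; exact hCR2R _
            · rw [hL, if_pos (by omega)]
              exact hCqL _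
        obtain ⟨T0, CRc, hT0a, hT0b, hCRcd, hCRcR, hCRcL0⟩ := hrightcut
        set g : ℕ → ℕ := fun u => if u < KP then idx u
          else if u < KP + k then u1 (u - KP)
          else if u < KP + k + k then v (u - (KP + k))
          else if u < KP + k + k + k then u2 (u - (KP + k + k))
          else idx (u - (KP + k + k + k) + T0) with hg
        set m' := KP + k + k + k + (mA - T0) with hm'
        have hgsub : IsSubseqIdx 0 n m' g := by
          apply subseq_of_consec
          · intro u hu
            simp only [hg]
            split_ifs with h1 h2 h3 h4
            · exact hidxn u (by omega)
            · exact hu1n (u - KP) (by omega)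
            · exact hvn (u - (KP + k)) (by omega)
            · exact hu2n (u - (KP + k + k)) (by omega)
            · exact hidxn (u - (KP + k + k + k) + T0) (by omega)
          · intro u hu
            simp only [hg]
            by_cases h1 : u + 1 < KP
            · rw [if_pos (by omega), if_pos h1]
              exact hsub.2 u (u + 1) (by omega) (by omega)
            · by_cases h2 : u + 1 = KP
              · rw [if_pos (by omega), if_neg (by omega), if_pos (by omega)]
                have h5 := hyu1 (u + 1 - KP) (by omega)
                have h6 : idx u ≤ idx (t - 1) := hidxle u (t - 1) (by omega) (by omega)
                omega
              · by_cases h3 : u + 1 < KP + k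
                · rw [if_neg (by omega : ¬ u < KP), if_pos (by omega : u < KP + k),
                    if_neg (by omega : ¬ u + 1 < KP), if_pos h3]
                  have := hu1sub.2 (u - KP) (u + 1 - KP) (by omega) (by omega)
                  omega
                · by_cases h4 : u + 1 = KP + k
                  · rw [if_neg (by omega : ¬ u < KP), if_pos (by omega : u < KP + k),
                      if_neg (by omega : ¬ u + 1 < KP),
                      if_neg (by omega : ¬ u + 1 < KP + k),
                      if_pos (by omega : u + 1 < KP + k + k)]
                    have := hu1v (u - KP) (u + 1 - (KP + k)) (by omega) (by omega)
                    omega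
                  · by_cases h5 : u + 1 < KP + k + k
                    · rw [if_neg (by omega : ¬ u < KP), if_neg (by omega : ¬ u < KP + k),
                        if_pos (by omega : u < KP + k + k),
                        if_neg (by omega : ¬ u + 1 < KP),
                        if_neg (by omega : ¬ u + 1 < KP + k), if_pos h5]
                      have := hvsub.2 (u - (KP + k)) (u + 1 - (KP + k)) (by omega) (by omega)
                      omega
                    · by_cases h6 : u + 1 = KP + k + k
                      · rw [if_neg (by omega : ¬ u < KP), if_neg (by omega : ¬ u < KP + k),
                          if_pos (by omega : u < KP + k + k),
                          if_neg (by omega : ¬ u + 1 < KP),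
                          if_neg (by omega : ¬ u + 1 < KP + k),
                          if_neg (by omega : ¬ u + 1 < KP + k + k),
                          if_pos (by omega : u + 1 < KP + k + k + k)]
                        have := hvu2 (u - (KP + k)) (u + 1 - (KP + k + k)) (by omega) (by omega)
                        omega
                      · by_cases h7 : u + 1 < KP + k + k + k
                        · rw [if_neg (by omega : ¬ u < KP), if_neg (by omega : ¬ u < KP + k),
                            if_neg (by omega : ¬ u < KP + k + k),
                            if_pos (by omega : u < KP + k + k + k),
                            if_neg (by omega : ¬ u + 1 < KP),
                            if_neg (by omega : ¬ u + 1 < KP + k),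
                            if_neg (by omega : ¬ u + 1 < KP + k + k), if_pos h7]
                          have := hu2sub.2 (u - (KP + k + k)) (u + 1 - (KP + k + k))
                            (by omega) (by omega)
                          omega
                        · by_cases h8 : u + 1 = KP + k + k + k
                          · rw [if_neg (by omega : ¬ u < KP),
                              if_neg (by omega : ¬ u < KP + k),
                              if_neg (by omega : ¬ u < KP + k + k),
                              if_pos (by omega : u < KP + k + k + k),
                              if_neg (by omega : ¬ u + 1 < KP),
                              if_neg (by omega : ¬ u + 1 < KP + k),
                              if_neg (by omega : ¬ u + 1 < KP + k + k),
                              if_neg (by omega : ¬ u + 1 < KP + k + k + k)]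
                            have h9 : T0 < mA := by omega
                            have h10 := hu2x (u - (KP + k + k)) (by omega)
                            have h11 : u + 1 - (KP + k + k + k) + T0 = T0 := by omega
                            rw [h11]
                            have h12 := hidxle t T0 (by omega) h9
                            omega
                          · rw [if_neg (by omega : ¬ u < KP),
                              if_neg (by omega : ¬ u < KP + k),
                              if_neg (by omega : ¬ u < KP + k + k),
                              if_neg (by omega : ¬ u < KP + k + k + k),
                              if_neg (by omega : ¬ u + 1 < KP),
                              if_neg (by omega : ¬ u + 1 < KP + k),
                              if_neg (by omega : ¬ u + 1 < KP + k + k),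
                              if_neg (by omega : ¬ u + 1 < KP + k + k + k)]
                            have := hsub.2 (u - (KP + k + k + k) + T0)
                              (u + 1 - (KP + k + k + k) + T0) (by omega) (by omega)
                            omega
        have hdistB := distinct_of_subseq hS hgsub
        obtain ⟨CL, hCLM, hCLd, hCLL, hCLR⟩ := shift_ex CLc (fun u => S (g u)) 0 0 KP
          (by omega) (by omega)
          (by
            intro u _ hu
            show S (g (u + 0)) = S (idx u)
            have : g (u + 0) = idx u := by
              simp only [hg]
              rw [if_pos (by omega : u + 0 < KP)]
              congr 1
            rw [this])
          (Or.inl (hCLcL 0)) (Or.inl hCLcR)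
        have hgmidCI1 : ∀ s, s < k → g (KP + s) = u1 s := by
          intro s hs
          simp only [hg]
          split_ifs <;> first
            | (congr 1; omega)
            | omega
        obtain ⟨CI1, hCI1M, hCI1d, hCI1L, hCI1R⟩ := single_ex (k := k)
          (B := fun u => S (g u)) (KP) (KP + k) true 0 0 (by omega)
          (Or.inl ⟨rfl, by
            intro u h1 h2
            have e1 : g u = u1 (u - (KP)) := by
              have := hgmidCI1 (u - (KP)) (by omega)
              rwa [show KP + (u - (KP)) = u from by omega] at this
            have e2 : g (u + 1) = u1 (u - (KP) + 1) := by
              have := hgmidCI1 (u - (KP) + 1) (by omega)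
              rwa [show KP + (u - (KP) + 1) = u + 1 from by omega] at this
            show S (g u) < S (g (u + 1))
            rw [e1, e2]
            exact hu1val (u - (KP)) (u - (KP) + 1) (by omega) (by omega)⟩)
          (Or.inl rfl) (Or.inl rfl) (by omega)

        have hgmidCD : ∀ s, s < k → g (KP + k + s) = v s := by
          intro s hs
          simp only [hg]
          split_ifs <;> first
            | (congr 1; omega)
            | omega
        obtain ⟨CD, hCDM, hCDd, hCDL, hCDR⟩ := single_ex (k := k)
          (B := fun u => S (g u)) (KP + k) (KP + k + k) false 0 0 (by omega)
          (Or.inr ⟨rfl, by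
            intro u h1 h2
            have e1 : g u = v (u - (KP + k)) := by
              have := hgmidCD (u - (KP + k)) (by omega)
              rwa [show KP + k + (u - (KP + k)) = u from by omega] at this
            have e2 : g (u + 1) = v (u - (KP + k) + 1) := by
              have := hgmidCD (u - (KP + k) + 1) (by omega)
              rwa [show KP + k + (u - (KP + k) + 1) = u + 1 from by omega] at this
            show S (g (u + 1)) < S (g u)
            rw [e1, e2]
            exact hvval (u - (KP + k)) (u - (KP + k) + 1) (by omega) (by omega)⟩)
          (Or.inl rfl) (Or.inl rfl) (by omega)

        have hgmidCI2 : ∀ s, s < k → g (KP + k + k + s) = u2 s := by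
          intro s hs
          simp only [hg]
          split_ifs <;> first
            | (congr 1; omega)
            | omega
        obtain ⟨CI2, hCI2M, hCI2d, hCI2L, hCI2R⟩ := single_ex (k := k)
          (B := fun u => S (g u)) (KP + k + k) (KP + k + k + k) true 0 0 (by omega)
          (Or.inl ⟨rfl, by
            intro u h1 h2
            have e1 : g u = u2 (u - (KP + k + k)) := by
              have := hgmidCI2 (u - (KP + k + k)) (by omega)
              rwa [show KP + k + k + (u - (KP + k + k)) = u from by omega] at this
            have e2 : g (u + 1) = u2 (u - (KP + k + k) + 1) := by
              have := hgmidCI2 (u - (KP + k + k) + 1) (by omega)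
              rwa [show KP + k + k + (u - (KP + k + k) + 1) = u + 1 from by omega] at this
            show S (g u) < S (g (u + 1))
            rw [e1, e2]
            exact hu2val (u - (KP + k + k)) (u - (KP + k + k) + 1) (by omega) (by omega)⟩)
          (Or.inl rfl) (Or.inl rfl) (by omega)

        obtain ⟨CRT, hCRTM, hCRTd, hCRTL, hCRTR⟩ := shift_ex CRc (fun u => S (g u))
          (KP + k + k + k - T0) (KP + k + k + k) m' (by omega) (by omega)
          (by
            intro u hu1' hu2'
            show S (g (u + (KP + k + k + k - T0))) = S (idx u)
            have : g (u + (KP + k + k + k - T0)) = idx u := by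
              simp only [hg]
              rw [if_neg (by omega), if_neg (by omega), if_neg (by omega),
                if_neg (by omega)]
              congr 1
              omega
            rw [this])
          (Or.inl hCRcL0) (Or.inl (hCRcR _))
        obtain ⟨Cm3, hCm3M, hCm3d, hCm3L, hCm3R⟩ := append_ex CI2 CRT (by
          by_cases h0 : CRT.M = 0
          · exact Or.inr (Or.inl h0)
          · right; right
            rw [hCRTd 0, hCRcd (by omega), hCI2d]
            rfl)
        obtain ⟨Cm2, hCm2M, hCm2d, hCm2L, hCm2R⟩ := append_ex CD Cm3 (by
          right; right
          rw [hCm3d 0, if_pos (by omega), hCI2d 0, hCDd]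
          rfl)
        obtain ⟨Cm1, hCm1M, hCm1d, hCm1L, hCm1R⟩ := append_ex CI1 Cm2 (by
          right; right
          rw [hCm2d 0, if_pos (by omega), hCDd 0, hCI1d]
          rfl)
        obtain ⟨CC, hCCM, hCCd, hCCL, hCCRf⟩ := append_ex CL Cm1 (by
          by_cases h0 : CL.M = 0
          · exact Or.inl h0
          · right; right
            rw [hCm1d 0, if_pos (by omega), hCI1d 0, hCLd, hCLM, hCLcd (by omega)]
            rfl)
        have hCCM1 : 1 ≤ CC.M := by omega
        have hCCRlast : CC.R (CC.M - 1) = 0 := by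
          rw [hCCRf, if_neg (by omega), hCm1R]
          by_cases h0 : CC.M - 1 - CL.M < CI1.M
          · rw [if_pos h0]; exact hCI1R _
          · rw [if_neg h0, hCm2R]
            by_cases h1 : CC.M - 1 - CL.M - CI1.M < CD.M
            · rw [if_pos h1]; exact hCDR _
            · rw [if_neg h1, hCm3R]
              by_cases h2 : CC.M - 1 - CL.M - CI1.M - CD.M < CI2.M
              · rw [if_pos h2]; exact hCI2R _
              · rw [if_neg h2, hCRTR]; exact hCRcR _
        have hroB := roller_of_cert (show 2 ≤ k by omega) hdistB CC hCCM1 hCCRlast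
        have hcontra := hmax m' g hgsub hroB
        omega
      · -- CASE V : cut front at p, insert I1 and D, keep back
        have hleftcut : ∃ KP, ∃ CLc : BlockCert k (fun u => S (idx u)) 0 KP,
            p ≤ KP ∧ KP ≤ p + 1 ∧ (1 ≤ CLc.M → CLc.d (CLc.M - 1) = false) ∧
            (∀ j, CLc.L j = 0) ∧ CLc.R (CLc.M - 1) = 0 := by
          by_cases hp1 : p = 0
          · refine ⟨0, BlockCert.empty k _ 0, by omega, by omega, ?_, fun j => rfl, rfl⟩
            intro h
            rw [BlockCert.empty_M] at h
            omega
          · obtain ⟨o, ho, hrun2, hD2⟩ := prev_run_of_incr hdistA hrun hinc (by omega) (by omega)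
            obtain ⟨C0, hC0d, hC0L⟩ := left_blocks hk hdistA hroll o p false hrun2
              (Or.inr ⟨rfl, hD2⟩)
            have hlenl := hroll o p hrun2
            obtain ⟨Cp, hCpM, hCpd, hCpL, hCpR⟩ := single_ex (k := k)
              (B := fun u => S (idx u)) o (p + 1) false 0 0 (by omega)
              (Or.inr ⟨rfl, hD2.sub (le_refl o) (by omega)⟩)
              (Or.inl rfl) (Or.inl rfl) (by omega)
            obtain ⟨CLc, hM, hd, hL, hR⟩ := append_ex C0 Cp (by
              by_cases h0 : C0.M = 0
              · exact Or.inl h0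
              · right; right
                rw [hCpd 0, hC0d (by omega)]
                rfl)
            refine ⟨p + 1, CLc, by omega, by omega, ?_, ?_, ?_⟩
            · intro _
              rw [hd, if_neg (by omega)]
              exact hCpd _
            · intro j
              rw [hL]
              by_cases h0 : j < C0.M
              · rw [if_pos h0]; exact hC0L j
              · rw [if_neg h0]; exact hCpL _
            · rw [hR, if_neg (by omega)]
              exact hCpR _
        obtain ⟨KP, CLc, hKPa, hKPb, hCLcd, hCLcL, hCLcR⟩ := hleftcut
        obtain ⟨CR2, hCR2d, hCR2R⟩ := right_blocks hk hdistA hroll mA p q true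
          (by omega) hrun (Or.inl ⟨rfl, hinc⟩)
        obtain ⟨Cc, hCcM, hCcd, hCcL, hCcR⟩ := single_ex (k := k)
          (B := fun u => S (idx u)) t (q + 1) true 0 0 (by omega)
          (Or.inl ⟨rfl, hinc.sub (by omega) (by omega)⟩)
          (Or.inl rfl) (Or.inl rfl) (by omega)
        obtain ⟨CRa, hCRaM, hCRad, hCRaL, hCRaR⟩ := append_ex Cc CR2 (by
          by_cases h0 : CR2.M = 0
          · exact Or.inr (Or.inl h0)
          · right; right
            rw [hCR2d (by omega), hCcd])
        have hCRaRall : ∀ j, CRa.R j = 0 := by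
          intro j
          rw [hCRaR]
          by_cases h0 : j < Cc.M
          · rw [if_pos h0]; exact hCcR _
          · rw [if_neg h0]; exact hCR2R _
        have hCRaL0 : CRa.L 0 = 0 := by
          rw [hCRaL, if_pos (by omega)]
          exact hCcL _
        have hCRad0 : CRa.d 0 = true := by
          rw [hCRad, if_pos (by omega)]
          exact hCcd _
        set g : ℕ → ℕ := fun u => if u < KP then idx u
          else if u < KP + k then u1 (u - KP)
          else if u < KP + k + k then v (u - (KP + k))
          else idx (u - (KP + k + k) + t) with hg
        set m' := KP + k + k + (mA - t) with hm'
        have hgsub : IsSubseqIdx 0 n m' g := by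
          apply subseq_of_consec
          · intro u hu
            simp only [hg]
            split_ifs with h1 h2 h3
            · exact hidxn u (by omega)
            · exact hu1n (u - KP) (by omega)
            · exact hvn (u - (KP + k)) (by omega)
            · exact hidxn (u - (KP + k + k) + t) (by omega)
          · intro u hu
            simp only [hg]
            by_cases h1 : u + 1 < KP
            · rw [if_pos (by omega), if_pos h1]
              exact hsub.2 u (u + 1) (by omega) (by omega)
            · by_cases h2 : u + 1 = KP
              · rw [if_pos (by omega), if_neg (by omega), if_pos (by omega)]
                have h5 := hyu1 (u + 1 - KP) (by omega)
                have h6 : idx u ≤ idx (t - 1) := hidxle u (t - 1) (by omega) (by omega)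
                omega
              · by_cases h3 : u + 1 < KP + k
                · rw [if_neg (by omega : ¬ u < KP), if_pos (by omega : u < KP + k),
                    if_neg (by omega : ¬ u + 1 < KP), if_pos h3]
                  have := hu1sub.2 (u - KP) (u + 1 - KP) (by omega) (by omega)
                  omega
                · by_cases h4 : u + 1 = KP + k
                  · rw [if_neg (by omega : ¬ u < KP), if_pos (by omega : u < KP + k),
                      if_neg (by omega : ¬ u + 1 < KP),
                      if_neg (by omega : ¬ u + 1 < KP + k),
                      if_pos (by omega : u + 1 < KP + k + k)]
                    have := hu1v (u - KP) (u + 1 - (KP + k)) (by omega) (by omega)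
                    omega
                  · by_cases h5 : u + 1 < KP + k + k
                    · rw [if_neg (by omega : ¬ u < KP), if_neg (by omega : ¬ u < KP + k),
                        if_pos (by omega : u < KP + k + k),
                        if_neg (by omega : ¬ u + 1 < KP),
                        if_neg (by omega : ¬ u + 1 < KP + k), if_pos h5]
                      have := hvsub.2 (u - (KP + k)) (u + 1 - (KP + k)) (by omega) (by omega)
                      omega
                    · by_cases h6 : u + 1 = KP + k + k
                      · rw [if_neg (by omega : ¬ u < KP), if_neg (by omega : ¬ u < KP + k),
                          if_pos (by omega : u < KP + k + k),
                          if_neg (by omega : ¬ u + 1 < KP),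
                          if_neg (by omega : ¬ u + 1 < KP + k),
                          if_neg (by omega : ¬ u + 1 < KP + k + k)]
                        have h8 := hvx (u - (KP + k)) (by omega)
                        have h9 : u + 1 - (KP + k + k) + t = t := by omega
                        rw [h9]
                        omega
                      · rw [if_neg (by omega : ¬ u < KP), if_neg (by omega : ¬ u < KP + k),
                          if_neg (by omega : ¬ u < KP + k + k),
                          if_neg (by omega : ¬ u + 1 < KP),
                          if_neg (by omega : ¬ u + 1 < KP + k),
                          if_neg (by omega : ¬ u + 1 < KP + k + k)]
                        have := hsub.2 (u - (KP + k + k) + t) (u + 1 - (KP + k + k) + t)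
                          (by omega) (by omega)
                        omega
        have hdistB := distinct_of_subseq hS hgsub
        obtain ⟨CL, hCLM, hCLd, hCLL, hCLR⟩ := shift_ex CLc (fun u => S (g u)) 0 0 KP
          (by omega) (by omega)
          (by
            intro u _ hu
            show S (g (u + 0)) = S (idx u)
            have : g (u + 0) = idx u := by
              simp only [hg]
              rw [if_pos (by omega : u + 0 < KP)]
              congr 1
            rw [this])
          (Or.inl (hCLcL 0)) (Or.inl hCLcR)
        have hgmidCI : ∀ s, s < k → g (KP + s) = u1 s := by
          intro s hs
          simp only [hg]
          split_ifs <;> first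
            | (congr 1; omega)
            | omega
        obtain ⟨CI, hCIM, hCId, hCIL, hCIR⟩ := single_ex (k := k)
          (B := fun u => S (g u)) (KP) (KP + k) true 0 0 (by omega)
          (Or.inl ⟨rfl, by
            intro u h1 h2
            have e1 : g u = u1 (u - (KP)) := by
              have := hgmidCI (u - (KP)) (by omega)
              rwa [show KP + (u - (KP)) = u from by omega] at this
            have e2 : g (u + 1) = u1 (u - (KP) + 1) := by
              have := hgmidCI (u - (KP) + 1) (by omega)
              rwa [show KP + (u - (KP) + 1) = u + 1 from by omega] at this
            show S (g u) < S (g (u + 1))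
            rw [e1, e2]
            exact hu1val (u - (KP)) (u - (KP) + 1) (by omega) (by omega)⟩)
          (Or.inl rfl) (Or.inl rfl) (by omega)

        have hgmidCD : ∀ s, s < k → g (KP + k + s) = v s := by
          intro s hs
          simp only [hg]
          split_ifs <;> first
            | (congr 1; omega)
            | omega
        obtain ⟨CD, hCDM, hCDd, hCDL, hCDR⟩ := single_ex (k := k)
          (B := fun u => S (g u)) (KP + k) (KP + k + k) false 0 0 (by omega)
          (Or.inr ⟨rfl, by
            intro u h1 h2
            have e1 : g u = v (u - (KP + k)) := by
              have := hgmidCD (u - (KP + k)) (by omega)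
              rwa [show KP + k + (u - (KP + k)) = u from by omega] at this
            have e2 : g (u + 1) = v (u - (KP + k) + 1) := by
              have := hgmidCD (u - (KP + k) + 1) (by omega)
              rwa [show KP + k + (u - (KP + k) + 1) = u + 1 from by omega] at this
            show S (g (u + 1)) < S (g u)
            rw [e1, e2]
            exact hvval (u - (KP + k)) (u - (KP + k) + 1) (by omega) (by omega)⟩)
          (Or.inl rfl) (Or.inl rfl) (by omega)

        obtain ⟨CR, hCRM, hCRd, hCRL, hCRR⟩ := shift_ex CRa (fun u => S (g u))
          (KP + k + k - t) (KP + k + k) m' (by omega) (by omega)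
          (by
            intro u hu1' hu2'
            show S (g (u + (KP + k + k - t))) = S (idx u)
            have : g (u + (KP + k + k - t)) = idx u := by
              simp only [hg]
              rw [if_neg (by omega), if_neg (by omega), if_neg (by omega)]
              congr 1
              omega
            rw [this])
          (Or.inl hCRaL0) (Or.inl (hCRaRall _))
        obtain ⟨Cm2, hCm2M, hCm2d, hCm2L, hCm2R⟩ := append_ex CD CR (by
          right; right
          rw [hCRd 0, hCRad0, hCDd]
          rfl)
        obtain ⟨Cm1, hCm1M, hCm1d, hCm1L, hCm1R⟩ := append_ex CI Cm2 (by
          right; right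
          rw [hCm2d 0, if_pos (by omega), hCDd 0, hCId]
          rfl)
        obtain ⟨CC, hCCM, hCCd, hCCL, hCCRf⟩ := append_ex CL Cm1 (by
          by_cases h0 : CL.M = 0
          · exact Or.inl h0
          · right; right
            rw [hCm1d 0, if_pos (by omega), hCId 0, hCLd, hCLM, hCLcd (by omega)]
            rfl)
        have hCCM1 : 1 ≤ CC.M := by omega
        have hCCRlast : CC.R (CC.M - 1) = 0 := by
          rw [hCCRf, if_neg (by omega), hCm1R]
          by_cases h0 : CC.M - 1 - CL.M < CI.M
          · rw [if_pos h0]; exact hCIR _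
          · rw [if_neg h0, hCm2R]
            by_cases h1 : CC.M - 1 - CL.M - CI.M < CD.M
            · rw [if_pos h1]; exact hCDR _
            · rw [if_neg h1, hCRR]; exact hCRaRall _
        have hroB := roller_of_cert (show 2 ≤ k by omega) hdistB CC hCCM1 hCCRlast
        have hcontra := hmax m' g hgsub hroB
        omega
    · rcases Nat.lt_or_ge (q + 1 - t) k with hb | hb
      · -- CASE W : keep front, cut back, insert D and I2
        have hrightcut : ∃ T0, ∃ CRc : BlockCert k (fun u => S (idx u)) T0 mA,
            q ≤ T0 ∧ T0 ≤ q + 1 ∧ (1 ≤ CRc.M → CRc.d 0 = false) ∧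
            (∀ j, CRc.R j = 0) ∧ CRc.L 0 = 0 := by
          by_cases hq1 : q + 1 = mA
          · refine ⟨mA, BlockCert.emptyEq k _ mA mA rfl, by omega, by omega, ?_,
              fun j => rfl, rfl⟩
            intro h
            rw [BlockCert.emptyEq_M] at h
            omega
          · obtain ⟨r, hr1, hr2, hrun2, hD2⟩ := next_run_of_incr hdistA hrun hinc
              (by omega) (by omega)
            obtain ⟨CR2, hCR2d, hCR2R⟩ := right_blocks hk hdistA hroll mA q r false
              (by omega) hrun2 (Or.inr ⟨rfl, hD2⟩)
            have hlenr := hroll q r hrun2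
            obtain ⟨Cq, hCqM, hCqd, hCqL, hCqR⟩ := single_ex (k := k)
              (B := fun u => S (idx u)) q (r + 1) false 0 0 (by omega)
              (Or.inr ⟨rfl, hD2.sub (le_refl q) (by omega)⟩)
              (Or.inl rfl) (Or.inl rfl) (by omega)
            obtain ⟨CRc, hM, hd, hL, hR⟩ := append_ex Cq CR2 (by
              by_cases h0 : CR2.M = 0
              · exact Or.inr (Or.inl h0)
              · right; right
                rw [hCR2d (by omega), hCqd])
            refine ⟨q, CRc, le_refl _, by omega, ?_, ?_, ?_⟩
            · intro _
              rw [hd, if_pos (by omega)]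
              exact hCqd _
            · intro j
              rw [hR]
              by_cases h0 : j < Cq.M
              · rw [if_pos h0]; exact hCqR _
              · rw [if_neg h0]; exact hCR2R _
            · rw [hL, if_pos (by omega)]
              exact hCqL _
        obtain ⟨T0, CRc, hT0a, hT0b, hCRcd, hCRcR, hCRcL0⟩ := hrightcut
        set g : ℕ → ℕ := fun u => if u < t then idx u else if u < t + k then v (u - t)
          else if u < t + k + k then u2 (u - (t + k)) else idx (u - (t + k + k) + T0) with hg
        set m' := t + k + k + (mA - T0) with hm'
        have hgsub : IsSubseqIdx 0 n m' g := by
          apply subseq_of_consec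
          · intro u hu
            simp only [hg]
            split_ifs with h1 h2 h3
            · exact hidxn u (by omega)
            · exact hvn (u - t) (by omega)
            · exact hu2n (u - (t + k)) (by omega)
            · exact hidxn (u - (t + k + k) + T0) (by omega)
          · intro u hu
            simp only [hg]
            by_cases h1 : u + 1 < t
            · rw [if_pos (by omega), if_pos h1]
              exact hsub.2 u (u + 1) (by omega) (by omega)
            · by_cases h2 : u + 1 = t
              · rw [if_pos (by omega), if_neg (by omega), if_pos (by omega)]
                have h5 := hyv 0 (by omega)
                have e1 : idx u = idx (t - 1) := by rw [show u = t - 1 from by omega]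
                have e2 : v (u + 1 - t) = v 0 := by rw [show u + 1 - t = 0 from by omega]
                rw [e1, e2]
                exact h5
              · by_cases h3 : u + 1 < t + k
                · rw [if_neg (by omega : ¬ u < t), if_pos (by omega : u < t + k),
                    if_neg (by omega : ¬ u + 1 < t), if_pos h3]
                  have := hvsub.2 (u - t) (u + 1 - t) (by omega) (by omega)
                  omega
                · by_cases h4 : u + 1 = t + k
                  · rw [if_neg (by omega : ¬ u < t), if_pos (by omega : u < t + k),
                      if_neg (by omega : ¬ u + 1 < t), if_neg (by omega : ¬ u + 1 < t + k),
                      if_pos (by omega : u + 1 < t + k + k)]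
                    have h5 := hvu2 (u - t) (u + 1 - (t + k)) (by omega) (by omega)
                    omega
                  · by_cases h5 : u + 1 < t + k + k
                    · rw [if_neg (by omega : ¬ u < t), if_neg (by omega : ¬ u < t + k),
                        if_pos (by omega : u < t + k + k), if_neg (by omega : ¬ u + 1 < t),
                        if_neg (by omega : ¬ u + 1 < t + k), if_pos h5]
                      have := hu2sub.2 (u - (t + k)) (u + 1 - (t + k)) (by omega) (by omega)
                      omega
                    · by_cases h6 : u + 1 = t + k + k
                      · rw [if_neg (by omega : ¬ u < t), if_neg (by omega : ¬ u < t + k),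
                          if_pos (by omega : u < t + k + k), if_neg (by omega : ¬ u + 1 < t),
                          if_neg (by omega : ¬ u + 1 < t + k),
                          if_neg (by omega : ¬ u + 1 < t + k + k)]
                        have h7 : T0 < mA := by omega
                        have h8 := hu2x (u - (t + k)) (by omega)
                        have h9 : u + 1 - (t + k + k) + T0 = T0 := by omega
                        rw [h9]
                        have h10 := hidxle t T0 (by omega) h7
                        omega
                      · rw [if_neg (by omega : ¬ u < t), if_neg (by omega : ¬ u < t + k),
                          if_neg (by omega : ¬ u < t + k + k),
                          if_neg (by omega : ¬ u + 1 < t),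
                          if_neg (by omega : ¬ u + 1 < t + k),
                          if_neg (by omega : ¬ u + 1 < t + k + k)]
                        have := hsub.2 (u - (t + k + k) + T0) (u + 1 - (t + k + k) + T0)
                          (by omega) (by omega)
                        omega
        have hdistB := distinct_of_subseq hS hgsub
        obtain ⟨C0, hC0d, hC0L⟩ := left_blocks hk hdistA hroll p q true hrun
          (Or.inl ⟨rfl, hinc⟩)
        obtain ⟨Cb, hCbM, hCbd, hCbL, hCbR⟩ := single_ex (k := k)
          (B := fun u => S (idx u)) p t true 0 0 hpt
          (Or.inl ⟨rfl, hinc.sub (le_refl p) (by omega)⟩)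
          (Or.inl rfl) (Or.inl rfl) (by omega)
        obtain ⟨CLa, hCLaM, hCLad, hCLaL, hCLaR⟩ := append_ex C0 Cb (by
          by_cases h0 : C0.M = 0
          · exact Or.inl h0
          · right; right
            rw [hCbd 0, hC0d (by omega)]
            rfl)
        have hCLaL0 : CLa.L 0 = 0 := by
          rw [hCLaL 0]
          by_cases h0 : 0 < C0.M
          · rw [if_pos h0]; exact hC0L 0
          · rw [if_neg h0]; exact hCbL _
        have hCLaRlast : CLa.R (CLa.M - 1) = 0 := by
          rw [hCLaR, if_neg (by omega)]
          exact hCbR _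
        have hCLadlast : CLa.d (CLa.M - 1) = true := by
          rw [hCLad, if_neg (by omega)]
          exact hCbd _
        obtain ⟨CL, hCLM, hCLd, hCLL, hCLR⟩ := shift_ex CLa (fun u => S (g u)) 0 0 t
          (by omega) (by omega)
          (by
            intro u _ hu
            show S (g (u + 0)) = S (idx u)
            have : g (u + 0) = idx u := by
              simp only [hg]
              rw [if_pos (by omega : u + 0 < t)]
              congr 1
            rw [this])
          (Or.inl hCLaL0) (Or.inl hCLaRlast)
        have hgmidCD : ∀ s, s < k → g (t + s) = v s := by
          intro s hs
          simp only [hg]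
          split_ifs <;> first
            | (congr 1; omega)
            | omega
        obtain ⟨CD, hCDM, hCDd, hCDL, hCDR⟩ := single_ex (k := k)
          (B := fun u => S (g u)) (t) (t + k) false 0 0 (by omega)
          (Or.inr ⟨rfl, by
            intro u h1 h2
            have e1 : g u = v (u - (t)) := by
              have := hgmidCD (u - (t)) (by omega)
              rwa [show t + (u - (t)) = u from by omega] at this
            have e2 : g (u + 1) = v (u - (t) + 1) := by
              have := hgmidCD (u - (t) + 1) (by omega)
              rwa [show t + (u - (t) + 1) = u + 1 from by omega] at this
            show S (g (u + 1)) < S (g u)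
            rw [e1, e2]
            exact hvval (u - (t)) (u - (t) + 1) (by omega) (by omega)⟩)
          (Or.inl rfl) (Or.inl rfl) (by omega)

        have hgmidCI : ∀ s, s < k → g (t + k + s) = u2 s := by
          intro s hs
          simp only [hg]
          split_ifs <;> first
            | (congr 1; omega)
            | omega
        obtain ⟨CI, hCIM, hCId, hCIL, hCIR⟩ := single_ex (k := k)
          (B := fun u => S (g u)) (t + k) (t + k + k) true 0 0 (by omega)
          (Or.inl ⟨rfl, by
            intro u h1 h2
            have e1 : g u = u2 (u - (t + k)) := by
              have := hgmidCI (u - (t + k)) (by omega)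
              rwa [show t + k + (u - (t + k)) = u from by omega] at this
            have e2 : g (u + 1) = u2 (u - (t + k) + 1) := by
              have := hgmidCI (u - (t + k) + 1) (by omega)
              rwa [show t + k + (u - (t + k) + 1) = u + 1 from by omega] at this
            show S (g u) < S (g (u + 1))
            rw [e1, e2]
            exact hu2val (u - (t + k)) (u - (t + k) + 1) (by omega) (by omega)⟩)
          (Or.inl rfl) (Or.inl rfl) (by omega)

        obtain ⟨CRT, hCRTM, hCRTd, hCRTL, hCRTR⟩ := shift_ex CRc (fun u => S (g u))
          (t + k + k - T0) (t + k + k) m' (by omega) (by omega)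
          (by
            intro u hu1 hu2
            show S (g (u + (t + k + k - T0))) = S (idx u)
            have : g (u + (t + k + k - T0)) = idx u := by
              simp only [hg]
              rw [if_neg (by omega), if_neg (by omega), if_neg (by omega)]
              congr 1
              omega
            rw [this])
          (Or.inl hCRcL0) (Or.inl (hCRcR _))
        obtain ⟨Cm2, hCm2M, hCm2d, hCm2L, hCm2R⟩ := append_ex CI CRT (by
          by_cases h0 : CRT.M = 0
          · exact Or.inr (Or.inl h0)
          · right; right
            rw [hCRTd 0, hCRcd (by omega), hCId]
            rfl)
        obtain ⟨Cm1, hCm1M, hCm1d, hCm1L, hCm1R⟩ := append_ex CD Cm2 (by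
          right; right
          rw [hCm2d 0, if_pos (by omega), hCId 0, hCDd]
          rfl)
        obtain ⟨CC, hCCM, hCCd, hCCL, hCCRf⟩ := append_ex CL Cm1 (by
          right; right
          rw [hCm1d 0, if_pos (by omega), hCDd 0, hCLd, hCLM, hCLadlast]
          rfl)
        have hCCM1 : 1 ≤ CC.M := by omega
        have hCCRlast : CC.R (CC.M - 1) = 0 := by
          rw [hCCRf, if_neg (by omega), hCm1R]
          by_cases h0 : CC.M - 1 - CL.M < CD.M
          · rw [if_pos h0]; exact hCDR _
          · rw [if_neg h0, hCm2R]
            by_cases h1 : CC.M - 1 - CL.M - CD.M < CI.M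
            · rw [if_pos h1]; exact hCIR _
            · rw [if_neg h1, hCRTR]; exact hCRcR _
        have hroB := roller_of_cert (show 2 ≤ k by omega) hdistB CC hCCM1 hCCRlast
        have hcontra := hmax m' g hgsub hroB
        omega
      · -- CASE U : keep both sides, insert D between t-1 and t
        set g : ℕ → ℕ := fun u => if u < t then idx u else if u < t + k then v (u - t)
          else idx (u - (t + k) + t) with hg
        set m' := t + k + (mA - t) with hm'
        have hgsub : IsSubseqIdx 0 n m' g := by
          apply subseq_of_consec
          · intro u hu
            simp only [hg]
            split_ifs with h1 h2
            · exact hidxn u (by omega)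
            · exact hvn (u - t) (by omega)
            · exact hidxn (u - (t + k) + t) (by omega)
          · intro u hu
            simp only [hg]
            by_cases h1 : u + 1 < t
            · rw [if_pos (by omega), if_pos h1]
              exact hsub.2 u (u + 1) (by omega) (by omega)
            · by_cases h2 : u + 1 = t
              · rw [if_pos (by omega), if_neg (by omega), if_pos (by omega)]
                have h5 := hyv 0 (by omega)
                have e1 : idx u = idx (t - 1) := by rw [show u = t - 1 from by omega]
                have e2 : v (u + 1 - t) = v 0 := by rw [show u + 1 - t = 0 from by omega]
                rw [e1, e2]
                exact h5
              · by_cases h3 : u + 1 < t + k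
                · rw [if_neg (by omega : ¬ u < t), if_pos (by omega : u < t + k),
                    if_neg (by omega : ¬ u + 1 < t), if_pos h3]
                  have := hvsub.2 (u - t) (u + 1 - t) (by omega) (by omega)
                  omega
                · by_cases h4 : u + 1 = t + k
                  · rw [if_neg (by omega : ¬ u < t), if_pos (by omega : u < t + k),
                      if_neg (by omega : ¬ u + 1 < t), if_neg (by omega : ¬ u + 1 < t + k)]
                    have h5 := hvx (u - t) (by omega)
                    have h6 : u + 1 - (t + k) + t = t := by omega
                    rw [h6]
                    omega
                  · rw [if_neg (by omega : ¬ u < t), if_neg (by omega : ¬ u < t + k),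
                      if_neg (by omega : ¬ u + 1 < t), if_neg (by omega : ¬ u + 1 < t + k)]
                    have := hsub.2 (u - (t + k) + t) (u + 1 - (t + k) + t)
                      (by omega) (by omega)
                    omega
        have hdistB : ∀ u, u + 1 < m' → S (g u) ≠ S (g (u + 1)) :=
          distinct_of_subseq hS hgsub
        obtain ⟨C0, hC0d, hC0L⟩ := left_blocks hk hdistA hroll p q true hrun
          (Or.inl ⟨rfl, hinc⟩)
        obtain ⟨Cb, hCbM, hCbd, hCbL, hCbR⟩ := single_ex (k := k)
          (B := fun u => S (idx u)) p t true 0 0 hpt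
          (Or.inl ⟨rfl, hinc.sub (le_refl p) (by omega)⟩)
          (Or.inl rfl) (Or.inl rfl) (by omega)
        obtain ⟨CLa, hCLaM, hCLad, hCLaL, hCLaR⟩ := append_ex C0 Cb (by
          by_cases h0 : C0.M = 0
          · exact Or.inl h0
          · right; right
            rw [hCbd 0, hC0d (by omega)]
            rfl)
        have hCLaL0 : CLa.L 0 = 0 := by
          rw [hCLaL 0]
          by_cases h0 : 0 < C0.M
          · rw [if_pos h0]; exact hC0L 0
          · rw [if_neg h0]; exact hCbL _
        have hCLaRlast : CLa.R (CLa.M - 1) = 0 := by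
          rw [hCLaR, if_neg (by omega)]
          exact hCbR _
        have hCLadlast : CLa.d (CLa.M - 1) = true := by
          rw [hCLad, if_neg (by omega)]
          exact hCbd _
        obtain ⟨CL, hCLM, hCLd, hCLL, hCLR⟩ := shift_ex CLa (fun u => S (g u)) 0 0 t
          (by omega) (by omega)
          (by
            intro u _ hu
            show S (g (u + 0)) = S (idx u)
            have : g (u + 0) = idx u := by
              simp only [hg]
              rw [if_pos (by omega : u + 0 < t)]
              congr 1
            rw [this])
          (Or.inl hCLaL0) (Or.inl hCLaRlast)
        have hgmid1 : ∀ s, s < k → g (t + s) = v s := by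
          intro s hs
          simp only [hg]
          split_ifs with h1 h2 h3 <;> first
            | (congr 1; omega)
            | omega
        obtain ⟨CD, hCDM, hCDd, hCDL, hCDR⟩ := single_ex (k := k)
          (B := fun u => S (g u)) (t) (t + k) false 0 0 (by omega)
          (Or.inr ⟨rfl, by
            intro u h1 h2
            have e1 : g u = v (u - (t)) := by
              have := hgmid1 (u - (t)) (by omega)
              rwa [show t + (u - (t)) = u from by omega] at this
            have e2 : g (u + 1) = v (u - (t) + 1) := by
              have := hgmid1 (u - (t) + 1) (by omega)
              rwa [show t + (u - (t) + 1) = u + 1 from by omega] at this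
            show S (g (u + 1)) < S (g u)
            rw [e1, e2]
            exact hvval (u - (t)) (u - (t) + 1) (by omega) (by omega)⟩)
          (Or.inl rfl) (Or.inl rfl) (by omega)

        obtain ⟨CR2, hCR2d, hCR2R⟩ := right_blocks hk hdistA hroll mA p q true
          (by omega) hrun (Or.inl ⟨rfl, hinc⟩)
        obtain ⟨Cc, hCcM, hCcd, hCcL, hCcR⟩ := single_ex (k := k)
          (B := fun u => S (idx u)) t (q + 1) true 0 0 (by omega)
          (Or.inl ⟨rfl, hinc.sub (by omega) (by omega)⟩)
          (Or.inl rfl) (Or.inl rfl) (by omega)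
        obtain ⟨CRa, hCRaM, hCRad, hCRaL, hCRaR⟩ := append_ex Cc CR2 (by
          by_cases h0 : CR2.M = 0
          · exact Or.inr (Or.inl h0)
          · right; right
            rw [hCR2d (by omega), hCcd])
        have hCRaRall : ∀ j, CRa.R j = 0 := by
          intro j
          rw [hCRaR]
          by_cases h0 : j < Cc.M
          · rw [if_pos h0]; exact hCcR _
          · rw [if_neg h0]; exact hCR2R _
        have hCRaL0 : CRa.L 0 = 0 := by
          rw [hCRaL, if_pos (by omega)]
          exact hCcL _
        have hCRad0 : CRa.d 0 = true := by
          rw [hCRad, if_pos (by omega)]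
          exact hCcd _
        obtain ⟨CR, hCRM, hCRd, hCRL, hCRR⟩ := shift_ex CRa (fun u => S (g u)) k
          (t + k) m' (by omega) (by omega)
          (by
            intro u hu1 hu2
            show S (g (u + k)) = S (idx u)
            have : g (u + k) = idx u := by
              simp only [hg]
              rw [if_neg (by omega), if_neg (by omega)]
              congr 1
              omega
            rw [this])
          (Or.inl hCRaL0) (Or.inl (hCRaRall _))
        obtain ⟨Cm, hCmM, hCmd, hCmL, hCmR⟩ := append_ex CD CR (by
          right; right
          rw [hCRd 0, hCRad0, hCDd]
          rfl)
        obtain ⟨CC, hCCM, hCCd, hCCL, hCCRf⟩ := append_ex CL Cm (by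
          right; right
          rw [hCmd 0, if_pos (by omega), hCDd 0, hCLd, hCLM, hCLadlast]
          rfl)
        have hCCM1 : 1 ≤ CC.M := by omega
        have hCCRlast : CC.R (CC.M - 1) = 0 := by
          rw [hCCRf, if_neg (by omega), hCmR]
          by_cases h0 : CC.M - 1 - CL.M < CD.M
          · rw [if_pos h0]; exact hCDR _
          · rw [if_neg h0, hCRR]; exact hCRaRall _
        have hroB := roller_of_cert (show 2 ≤ k by omega) hdistB CC hCCM1 hCCRlast
        have hcontra := hmax m' g hgsub hroB
        omega

end Rollercoaster
end

section
/- Let S[1:n] be a sequence of distinct reals, let 1 ≤ i ≤ n, let A be a k-rollercoaster in S[1:i] whose last run is decreasing, and let r be a strictly increasing subsequence of S[i:n] with |r| ≥ k. Then there exists a k-rollercoaster in S[1:n] of length at least |A| + |r| − 1 whose last run is increasing. -/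
namespace Rollercoaster

lemma mono_congr {A B : ℕ → ℝ} {m a b : ℕ} (h : ∀ t, t < m → B t = A t) (hb : b < m) :
    MonoSlice B a b ↔ MonoSlice A a b := by
  have key : ∀ t, a ≤ t → t < b → (B t = A t ∧ B (t+1) = A (t+1)) := by
    intro t ht1 ht2
    exact ⟨h t (by omega), h (t+1) (by omega)⟩
  constructor
  · rintro (hi | hd)
    · exact Or.inl (fun t h1 h2 => by have := key t h1 h2; rw [← this.1, ← this.2]; exact hi t h1 h2)
    · exact Or.inr (fun t h1 h2 => by have := key t h1 h2; rw [← this.1, ← this.2]; exact hd t h1 h2)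
  · rintro (hi | hd)
    · exact Or.inl (fun t h1 h2 => by have := key t h1 h2; rw [this.1, this.2]; exact hi t h1 h2)
    · exact Or.inr (fun t h1 h2 => by have := key t h1 h2; rw [this.1, this.2]; exact hd t h1 h2)

lemma glue (k mA mB : ℕ) (A B : ℕ → ℝ) (p : ℕ) (hk : 3 ≤ k)
    (hrunA : IsRun mA A p (mA - 1)) (hdecA : DecrSlice A p (mA - 1))
    (hAroll : IsRollercoaster k mA A)
    (hagree : ∀ t, t < mA - 1 → B t = A t)
    (hBdec : DecrSlice B p (mA - 1))
    (hBinc : IncrSlice B (mA - 1) (mB - 1))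
    (hmB : mA - 1 + k ≤ mB) :
    IsRollercoaster k mB B ∧ LastRunInc mB B := by
  have hpk := hAroll p (mA - 1) hrunA
  obtain ⟨hpq, hqm, _, hlmaxA, _⟩ := hrunA
  have hm1 : 1 ≤ mA := by omega
  have hpkm : p + k ≤ mA := by omega
  have e : mA - 2 + 1 = mA - 1 := by omega
  have hnd : ∀ (_ : 1 ≤ p), A p < A (p - 1) → False := by
    intro hp hlt
    have hmono : MonoSlice A (p - 1) (mA - 1) := by
      refine Or.inr ?_
      intro t ht1 ht2
      rcases Nat.lt_or_ge t p with h | h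
      · have hte : t = p - 1 := by omega
        subst hte
        have e2 : p - 1 + 1 = p := by omega
        rw [e2]; exact hlt
      · exact hdecA t h ht2
    rcases hlmaxA with h0 | hnm
    · omega
    · exact hnm hmono
  have hBc : B (mA - 1) < B (mA - 2) := by
    have := hBdec (mA - 2) (by omega) (by omega)
    rwa [e] at this
  have hBc2 : B (mA - 1) < B (mA - 1 + 1) := hBinc (mA - 1) le_rfl (by omega)
  have hroll : IsRollercoaster k mB B := by
    intro u v hrun
    obtain ⟨huv, hvm, hmono, hlmax, hrmax⟩ := hrun
    rcases Nat.lt_or_ge v (mA - 1) with hvlt | hvge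
    · have hrm : ¬ MonoSlice B u (v + 1) := by
        rcases hrmax with h | h
        · omega
        · exact h
      rcases Nat.lt_or_ge (v + 1) (mA - 1) with hv1 | hv1
      · have hA_run : IsRun mA A u v := by
          refine ⟨huv, by omega, ?_, ?_, ?_⟩
          · exact (mono_congr hagree (by omega : v < mA - 1)).mp hmono
          · rcases hlmax with h0 | hnm
            · exact Or.inl h0
            · exact Or.inr (fun hm => hnm ((mono_congr hagree (by omega : v < mA - 1)).mpr hm))
          · exact Or.inr (fun hm => hrm ((mono_congr hagree (by omega : v + 1 < mA - 1)).mpr hm))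
        exact hAroll u v hA_run
      · exfalso
        have hveq : v = mA - 2 := by omega
        rcases Nat.lt_or_ge u p with hup | hup
        · have hmA : MonoSlice A u v := (mono_congr hagree (by omega : v < mA - 1)).mp hmono
          rcases hmA with hi | hd
          · have h1 : A p < A (p + 1) := hi p (by omega) (by omega)
            have h2 : A (p + 1) < A p := hdecA p le_rfl (by omega)
            linarith
          · have h1 : A p < A (p - 1) := by
              have := hd (p - 1) (by omega) (by omega)
              have e2 : p - 1 + 1 = p := by omega
              rwa [e2] at this
            exact hnd (by omega) h1
        · apply hrm
          exact Or.inr (fun t ht1 ht2 => hBdec t (by omega) (by omega))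
    · rcases Nat.lt_or_ge (mA - 1) v with hvgt | hveq'
      · have huc : mA - 1 ≤ u := by
          by_contra hu
          push_neg at hu
          rcases hmono with hi | hd
          · have := hi (mA - 2) (by omega) (by omega)
            rw [e] at this
            linarith
          · have := hd (mA - 1) (by omega) (by omega)
            linarith
        have hv : v = mB - 1 := by
          by_contra hv
          have hrm : ¬ MonoSlice B u (v + 1) := by
            rcases hrmax with h | h
            · omega
            · exact h
          exact hrm (Or.inl (fun t ht1 ht2 => hBinc t (by omega) (by omega)))
        have hu : u = mA - 1 := by
          by_contra hu
          have h1 : mA - 1 < u := by omega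
          rcases hlmax with h0 | hnm
          · omega
          · exact hnm (Or.inl (fun t ht1 ht2 => hBinc t (by omega) (by omega)))
        omega
      · have hveq : v = mA - 1 := by omega
        subst hveq
        have hrm : ¬ MonoSlice B u (mA - 1 + 1) := by
          rcases hrmax with h | h
          · omega
          · exact h
        have hulc : u < mA - 1 := by
          rcases Nat.lt_or_ge u (mA - 1) with h | h
          · exact h
          · exfalso
            have hue : u = mA - 1 := by omega
            exact hrm (Or.inl (fun t ht1 ht2 => hBinc t (by omega) (by omega)))
        have hdB : DecrSlice B u (mA - 1) := by
          rcases hmono with hi | hd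
          · exfalso
            have := hi (mA - 2) (by omega) (by omega)
            rw [e] at this
            linarith
          · exact hd
        have hup : u = p := by
          rcases lt_trichotomy u p with h | h | h
          · exfalso
            have h1 : B p < B (p - 1) := by
              have := hdB (p - 1) (by omega) (by omega)
              have e2 : p - 1 + 1 = p := by omega
              rwa [e2] at this
            have h2 : A p < A (p - 1) := by
              rw [← hagree p (by omega), ← hagree (p - 1) (by omega)]
              exact h1
            exact hnd (by omega) h2
          · exact h
          · exfalso
            rcases hlmax with h0 | hnm
            · omega
            · exact hnm (Or.inr (fun t ht1 ht2 => hBdec t (by omega) (by omega)))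
        omega
  have hlast : LastRunInc mB B := by
    refine ⟨by omega, mA - 1, ⟨by omega, by omega, Or.inl hBinc, Or.inr ?_, Or.inl (by omega)⟩, hBinc⟩
    rintro (hi | hd)
    · have := hi (mA - 2) (by omega) (by omega)
      rw [e] at this
      linarith
    · have := hd (mA - 1) (by omega) (by omega)
      linarith
  exact ⟨hroll, hlast⟩


/-- If `A` is a `k`-rollercoaster in the prefix `S[1:i]` (positions `[0, i)`) with the
last run decreasing, and `r` is a strictly increasing subsequence of `S[i:n]`
(positions `[i-1, n)`) of length at least `k`, then there is a `k`-rollercoaster in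
`S[1:n]` of length at least `|A| + |r| - 1` whose last run is increasing. -/
theorem stmt3 (k n : ℕ) (hk : 3 ≤ k) (S : ℕ → ℝ) (hS : DistinctOn n S)
    (i : ℕ) (hi1 : 1 ≤ i) (hin : i ≤ n)
    (mA : ℕ) (idxA : ℕ → ℕ) (hA : IsSubseqIdx 0 i mA idxA)
    (hAroll : IsRollercoaster k mA (fun t => S (idxA t)))
    (hAdec : LastRunDec mA (fun t => S (idxA t)))
    (mr : ℕ) (idxr : ℕ → ℕ) (hr : IsSubseqIdx (i - 1) n mr idxr)
    (hrinc : ∀ s t, s < t → t < mr → S (idxr s) < S (idxr t))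
    (hrk : k ≤ mr) :
    ∃ (mB : ℕ) (idxB : ℕ → ℕ), IsSubseqIdx 0 n mB idxB ∧
      IsRollercoaster k mB (fun t => S (idxB t)) ∧
      LastRunInc mB (fun t => S (idxB t)) ∧
      mA + mr - 1 ≤ mB := by
  obtain ⟨hmA1, p, hrunA, hdecA⟩ := hAdec
  have hpk := hAroll p (mA - 1) hrunA
  have hpq : p ≤ mA - 1 := hrunA.1
  have hpkm : p + k ≤ mA := by omega
  by_cases hcase : S (idxA (mA - 1)) < S (idxr 0)
  · -- append all of r after A
    set idxB : ℕ → ℕ := fun t => if t < mA then idxA t else idxr (t - mA) with hidxB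
    have hsub : IsSubseqIdx 0 n (mA + mr) idxB := by
      constructor
      · intro t ht
        simp only [hidxB]
        split
        · exact ⟨Nat.zero_le _, lt_of_lt_of_le (hA.1 t (by omega)).2 hin⟩
        · exact ⟨Nat.zero_le _, (hr.1 (t - mA) (by omega)).2⟩
      · intro s t hst htm
        simp only [hidxB]
        rcases Nat.lt_or_ge t mA with ht | ht
        · rw [if_pos (by omega : s < mA), if_pos ht]
          exact hA.2 s t hst ht
        · rcases Nat.lt_or_ge s mA with hs | hs
          · rw [if_pos hs, if_neg (by omega : ¬ t < mA)]
            have h1 : idxA s ≤ idxA (mA - 1) := by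
              rcases Nat.lt_or_ge s (mA - 1) with h | h
              · exact le_of_lt (hA.2 s (mA - 1) h (by omega))
              · have hse : s = mA - 1 := by omega
                rw [hse]
            have h2 : idxA (mA - 1) < idxr 0 := by
              have ha := (hA.1 (mA - 1) (by omega)).2
              have hb := (hr.1 0 (by omega)).1
              rcases Nat.lt_or_ge (idxA (mA - 1)) (idxr 0) with h | h
              · exact h
              · exfalso
                have heq : idxA (mA - 1) = idxr 0 := by omega
                rw [heq] at hcase
                exact lt_irrefl _ hcase
            have h3 : idxr 0 ≤ idxr (t - mA) := by
              rcases Nat.eq_zero_or_pos (t - mA) with h | h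
              · rw [h]
              · exact le_of_lt (hr.2 0 (t - mA) h (by omega))
            omega
          · rw [if_neg (by omega : ¬ s < mA), if_neg (by omega : ¬ t < mA)]
            exact hr.2 (s - mA) (t - mA) (by omega) (by omega)
    have hag : ∀ t, t < mA - 1 → S (idxB t) = S (idxA t) := by
      intro t ht
      simp only [hidxB]
      rw [if_pos (by omega : t < mA)]
    have hbd : DecrSlice (fun t => S (idxB t)) p (mA - 1) := by
      intro t ht1 ht2
      simp only [hidxB]
      rw [if_pos (by omega : t < mA), if_pos (by omega : t + 1 < mA)]
      exact hdecA t ht1 ht2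
    have hbi : IncrSlice (fun t => S (idxB t)) (mA - 1) (mA + mr - 1) := by
      intro t ht1 ht2
      simp only [hidxB]
      rcases Nat.lt_or_ge t mA with h | h
      · have hteq : t = mA - 1 := by omega
        rw [if_pos h, if_neg (by omega : ¬ t + 1 < mA)]
        have h0 : t + 1 - mA = 0 := by omega
        rw [h0, hteq]
        exact hcase
      · rw [if_neg (by omega : ¬ t < mA), if_neg (by omega : ¬ t + 1 < mA)]
        exact hrinc (t - mA) (t + 1 - mA) (by omega) (by omega)
    have hglue := glue k mA (mA + mr) (fun t => S (idxA t)) (fun t => S (idxB t)) p hk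
      hrunA hdecA hAroll hag hbd hbi (by omega)
    exact ⟨mA + mr, idxB, hsub, hglue.1, hglue.2, by omega⟩
  · -- drop the last element of A, glue r at the decreasing run
    push_neg at hcase
    set idxB : ℕ → ℕ := fun t => if t < mA - 1 then idxA t else idxr (t - (mA - 1)) with hidxB
    have hsub : IsSubseqIdx 0 n (mA - 1 + mr) idxB := by
      constructor
      · intro t ht
        simp only [hidxB]
        split
        · exact ⟨Nat.zero_le _, lt_of_lt_of_le (hA.1 t (by omega)).2 hin⟩
        · exact ⟨Nat.zero_le _, (hr.1 (t - (mA - 1)) (by omega)).2⟩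
      · intro s t hst htm
        simp only [hidxB]
        rcases Nat.lt_or_ge t (mA - 1) with ht | ht
        · rw [if_pos (by omega : s < mA - 1), if_pos ht]
          exact hA.2 s t hst (by omega)
        · rcases Nat.lt_or_ge s (mA - 1) with hs | hs
          · rw [if_pos hs, if_neg (by omega : ¬ t < mA - 1)]
            have h1 : idxA s < idxA (mA - 1) := hA.2 s (mA - 1) hs (by omega)
            have h2 : idxA (mA - 1) < i := (hA.1 (mA - 1) (by omega)).2
            have h3 : i - 1 ≤ idxr 0 := (hr.1 0 (by omega)).1
            have h4 : idxr 0 ≤ idxr (t - (mA - 1)) := by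
              rcases Nat.eq_zero_or_pos (t - (mA - 1)) with h | h
              · rw [h]
              · exact le_of_lt (hr.2 0 (t - (mA - 1)) h (by omega))
            omega
          · rw [if_neg (by omega : ¬ s < mA - 1), if_neg (by omega : ¬ t < mA - 1)]
            exact hr.2 (s - (mA - 1)) (t - (mA - 1)) (by omega) (by omega)
    have hag : ∀ t, t < mA - 1 → S (idxB t) = S (idxA t) := by
      intro t ht
      simp only [hidxB]
      rw [if_pos ht]
    have hbd : DecrSlice (fun t => S (idxB t)) p (mA - 1) := by
      intro t ht1 ht2
      simp only [hidxB]
      rcases Nat.lt_or_ge (t + 1) (mA - 1) with h | h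
      · rw [if_pos (by omega : t < mA - 1), if_pos h]
        exact hdecA t ht1 ht2
      · have hteq : t = mA - 2 := by omega
        rw [if_pos (by omega : t < mA - 1), if_neg (by omega : ¬ t + 1 < mA - 1)]
        have h0 : t + 1 - (mA - 1) = 0 := by omega
        rw [h0, hteq]
        have h5 : S (idxA (mA - 1)) < S (idxA (mA - 2)) := by
          have := hdecA (mA - 2) (by omega) (by omega)
          have e : mA - 2 + 1 = mA - 1 := by omega
          simp only [e] at this
          exact this
        linarith
    have hbi : IncrSlice (fun t => S (idxB t)) (mA - 1) (mA - 1 + mr - 1) := by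
      intro t ht1 ht2
      simp only [hidxB]
      rw [if_neg (by omega : ¬ t < mA - 1), if_neg (by omega : ¬ t + 1 < mA - 1)]
      exact hrinc (t - (mA - 1)) (t + 1 - (mA - 1)) (by omega) (by omega)
    have hglue := glue k mA (mA - 1 + mr) (fun t => S (idxA t)) (fun t => S (idxB t)) p hk
      hrunA hdecA hAroll hag hbd hbi (by omega)
    exact ⟨mA - 1 + mr, idxB, hsub, hglue.1, hglue.2, by omega⟩

end Rollercoaster
end

section
/- Let S[1:n] be a sequence of distinct reals and let A be a k-rollercoaster of maximum length among all k-rollercoasters in S[1:n] whose last run is increasing (respectively, decreasing). Let r be the last run of A and let S[i] be the first element of r. Then r is a longest strictly increasing (respectively, strictly decreasing) subsequence of S[i:n]. -/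
namespace Rollercoaster

/- ### negation transfer lemmas -/

lemma IncrSlice_neg (A : ℕ → ℝ) (a b : ℕ) :
    IncrSlice (fun t => -A t) a b ↔ DecrSlice A a b := by
  constructor <;> intro h t h1 h2 <;> have := h t h1 h2 <;> simp only [] at this ⊢ <;> linarith

lemma DecrSlice_neg (A : ℕ → ℝ) (a b : ℕ) :
    DecrSlice (fun t => -A t) a b ↔ IncrSlice A a b := by
  constructor <;> intro h t h1 h2 <;> have := h t h1 h2 <;> simp only [] at this ⊢ <;> linarith

lemma MonoSlice_neg (A : ℕ → ℝ) (a b : ℕ) :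
    MonoSlice (fun t => -A t) a b ↔ MonoSlice A a b := by
  unfold MonoSlice
  rw [IncrSlice_neg, DecrSlice_neg, or_comm]

lemma IsRun_neg (m : ℕ) (A : ℕ → ℝ) (p q : ℕ) :
    IsRun m (fun t => -A t) p q ↔ IsRun m A p q := by
  unfold IsRun
  rw [MonoSlice_neg, MonoSlice_neg, MonoSlice_neg]

lemma RC_neg (k m : ℕ) (A : ℕ → ℝ) :
    IsRollercoaster k m (fun t => -A t) ↔ IsRollercoaster k m A := by
  unfold IsRollercoaster
  exact forall₂_congr fun p q => imp_congr (IsRun_neg m A p q) Iff.rfl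

lemma LastRunInc_neg (m : ℕ) (A : ℕ → ℝ) :
    LastRunInc m (fun t => -A t) ↔ LastRunDec m A := by
  unfold LastRunInc LastRunDec
  constructor
  · rintro ⟨h1, p, h2, h3⟩
    exact ⟨h1, p, (IsRun_neg m A p (m-1)).1 h2, (IncrSlice_neg A p (m-1)).1 h3⟩
  · rintro ⟨h1, p, h2, h3⟩
    exact ⟨h1, p, (IsRun_neg m A p (m-1)).2 h2, (IncrSlice_neg A p (m-1)).2 h3⟩

lemma LDS_neg (S : ℕ → ℝ) (a b : ℕ) : LDS S a b = LIS (fun j => -S j) a b := by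
  unfold LDS LIS
  congr 1
  ext m
  constructor
  · rintro ⟨idx, h1, h2⟩
    refine ⟨idx, h1, fun s t hs ht => ?_⟩
    have := h2 s t hs ht
    simp only []
    linarith
  · rintro ⟨idx, h1, h2⟩
    refine ⟨idx, h1, fun s t hs ht => ?_⟩
    have := h2 s t hs ht
    simp only [] at this
    linarith

/- ### helper lemmas -/

lemma incr_chain (A : ℕ → ℝ) (a b u v : ℕ) (h : IncrSlice A a b)
    (hu : a ≤ u) (huv : u < v) (hv : v ≤ b) : A u < A v := by
  induction v with
  | zero => omega
  | succ w ih =>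
    rcases Nat.lt_or_ge u w with hw | hw
    · exact lt_trans (ih (by omega) (by omega)) (h w (by omega) (by omega))
    · have he : u = w := by omega
      subst he
      exact h u hu (by omega)

lemma idx_ge (m : ℕ) (idx : ℕ → ℕ) (h : ∀ s t, s < t → t < m → idx s < idx t) :
    ∀ t, t < m → t ≤ idx t := by
  intro t
  induction t with
  | zero => intro _; exact Nat.zero_le _
  | succ w ih =>
    intro hw
    have h1 := h w (w+1) (by omega) hw
    have h2 := ih (by omega)
    omega


lemma inc_main (k n : ℕ) (hk : 3 ≤ k) (S : ℕ → ℝ) (hS : DistinctOn n S)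
    (mA : ℕ) (idxA : ℕ → ℕ) (p : ℕ)
    (hIdx : IsSubseqIdx 0 n mA idxA)
    (hMax : ∀ (m' : ℕ) (idx' : ℕ → ℕ), IsSubseqIdx 0 n m' idx' →
        IsRollercoaster k m' (fun t => S (idx' t)) →
        LastRunInc m' (fun t => S (idx' t)) → m' ≤ mA)
    (hRun : IsRun mA (fun t => S (idxA t)) p (mA - 1))
    (hInc : IncrSlice (fun t => S (idxA t)) p (mA - 1))
    (hRC : IsRollercoaster k mA (fun t => S (idxA t))) :
    mA - p = LIS S (idxA p) n := by
  set A : ℕ → ℝ := fun t => S (idxA t) with hAdef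
  obtain ⟨hpq, hqm, _, hleft, _⟩ := hRun
  have hmA1 : 1 ≤ mA := by omega
  have hk' : k ≤ mA - p := by
    have := hRC p (mA - 1) ⟨hpq, hqm, Or.inl hInc, hleft, Or.inl (by omega)⟩
    omega
  have hmAp : p + 3 ≤ mA := by omega
  have hAdist : ∀ s t, s < mA → t < mA → s ≠ t → A s ≠ A t := by
    intro s t hs ht hne hEq
    have h := hS (idxA s) (idxA t) (hIdx.1 s hs).2 (hIdx.1 t ht).2 hEq
    rcases Nat.lt_or_ge s t with h1 | h1
    · exact absurd h (Nat.ne_of_lt (hIdx.2 s t h1 ht))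
    · exact absurd h.symm (Nat.ne_of_lt (hIdx.2 t s (by omega) hs))
  have hjun : 1 ≤ p → A p < A (p - 1) := by
    intro hp
    have hne := hAdist (p-1) p (by omega) (by omega) (by omega)
    rcases lt_or_gt_of_ne hne with hlt | hgt
    · exfalso
      rcases hleft with h0 | hnm
      · omega
      · apply hnm
        left
        intro t ht1 ht2
        rcases Nat.lt_or_ge t p with htp | htp
        · have he : t = p - 1 := by omega
          subst he
          have : p - 1 + 1 = p := by omega
          rw [this]
          exact hlt
        · exact hInc t htp ht2
    · exact hgt
  set i := idxA p with hidef
  have hin : i < n := (hIdx.1 p (by omega)).2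
  -- the candidate set
  have hmem : (mA - p) ∈ {m | ∃ idx : ℕ → ℕ, IsSubseqIdx i n m idx ∧
      ∀ s t, s < t → t < m → S (idx s) < S (idx t)} := by
    refine ⟨fun s => idxA (p + s), ⟨?_, ?_⟩, ?_⟩
    · intro t ht
      constructor
      · rcases Nat.eq_zero_or_pos t with h0 | h0
        · subst h0; simp; exact hidef.le
        · exact le_of_lt (hIdx.2 p (p + t) (by omega) (by omega))
      · exact (hIdx.1 (p + t) (by omega)).2
    · intro s t hst ht
      exact hIdx.2 (p + s) (p + t) (by omega) (by omega)
    · intro s t hst ht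
      exact incr_chain A p (mA - 1) (p + s) (p + t) hInc (by omega) (by omega) (by omega)
  have hbdd : BddAbove {m | ∃ idx : ℕ → ℕ, IsSubseqIdx i n m idx ∧
      ∀ s t, s < t → t < m → S (idx s) < S (idx t)} := by
    refine ⟨n, ?_⟩
    rintro m ⟨idx, ⟨hb, hm⟩, -⟩
    rcases Nat.eq_zero_or_pos m with h0 | h0
    · omega
    · have h1 := idx_ge m idx hm (m - 1) (by omega)
      have h2 := (hb (m - 1) (by omega)).2
      omega
  have hub : ∀ m ∈ {m | ∃ idx : ℕ → ℕ, IsSubseqIdx i n m idx ∧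
      ∀ s t, s < t → t < m → S (idx s) < S (idx t)}, m ≤ mA - p := by
    rintro m ⟨idx, ⟨hbnd, hmono⟩, hvals⟩
    by_contra hgt
    push_neg at hgt
    -- build a longer rollercoaster, contradiction
    obtain ⟨L, idxT, hLgt, hT1, hT2, hTmono, hTvals, hTjun⟩ :
        ∃ (L : ℕ) (idxT : ℕ → ℕ), (mA - p < L) ∧ (∀ t, t < L → i ≤ idxT t) ∧
          (∀ t, t < L → idxT t < n) ∧ (∀ s t, s < t → t < L → idxT s < idxT t) ∧
          (∀ s t, s < t → t < L → S (idxT s) < S (idxT t)) ∧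
          (1 ≤ p → S (idxT 0) < S (idxA (p - 1))) := by
      by_cases hc : p = 0 ∨ idx 0 = i ∨ S (idx 0) < S i
      · refine ⟨m, idx, hgt, fun t ht => (hbnd t ht).1, fun t ht => (hbnd t ht).2,
          hmono, hvals, ?_⟩
        intro hp
        have hj := hjun hp
        rcases hc with h | h | h
        · omega
        · rw [h]; exact hj
        · exact lt_trans h hj
      · push_neg at hc
        obtain ⟨hp0, hne, hge⟩ := hc
        have hi0 : i < idx 0 := lt_of_le_of_ne (hbnd 0 (by omega)).1 (Ne.symm hne)
        have hSne : S i ≠ S (idx 0) := by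
          intro hEq
          exact (Nat.ne_of_lt hi0) (hS i (idx 0) hin (hbnd 0 (by omega)).2 hEq)
        have hSlt : S i < S (idx 0) := lt_of_le_of_ne hge hSne
        refine ⟨m + 1, fun s => if s = 0 then i else idx (s - 1), by omega, ?_, ?_, ?_, ?_, ?_⟩
        · intro t ht
          by_cases h0 : t = 0
          · simp [h0]
          · simp only [h0, if_false]
            exact le_trans (le_of_lt hi0)
              (by rcases Nat.eq_zero_or_pos (t - 1) with h1 | h1
                  · rw [h1]
                  · exact le_of_lt (hmono 0 (t - 1) h1 (by omega)))
        · intro t ht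
          by_cases h0 : t = 0
          · simp [h0]; exact hin
          · simp only [h0, if_false]
            exact (hbnd (t - 1) (by omega)).2
        · intro s t hst ht
          by_cases h0 : s = 0
          · subst h0
            simp only [if_pos rfl, if_neg (by omega : t ≠ 0)]
            rcases Nat.eq_zero_or_pos (t - 1) with h1 | h1
            · rw [h1]; exact hi0
            · exact lt_trans hi0 (hmono 0 (t - 1) h1 (by omega))
          · simp only [if_neg h0, if_neg (by omega : t ≠ 0)]
            exact hmono (s - 1) (t - 1) (by omega) (by omega)
        · intro s t hst ht
          by_cases h0 : s = 0
          · subst h0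
            simp only [if_pos rfl, if_neg (by omega : t ≠ 0)]
            rcases Nat.eq_zero_or_pos (t - 1) with h1 | h1
            · rw [h1]; exact hSlt
            · exact lt_trans hSlt (hvals 0 (t - 1) h1 (by omega))
          · simp only [if_neg h0, if_neg (by omega : t ≠ 0)]
            exact hvals (s - 1) (t - 1) (by omega) (by omega)
        · intro hp
          simp only [if_pos rfl]
          exact hjun hp
    have hL4 : 4 ≤ L := by omega
    set m' := p + L with hm'def
    set idx' : ℕ → ℕ := fun t => if t < p then idxA t else idxT (t - p) with hidx'def
    set B : ℕ → ℝ := fun t => S (idx' t) with hBdef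
    have hip : ∀ t, t < p → idx' t = idxA t := by
      intro t ht; simp only [hidx'def, if_pos ht]
    have hit : ∀ t, p ≤ t → idx' t = idxT (t - p) := by
      intro t ht; simp only [hidx'def, if_neg (by omega : ¬ t < p)]
    have hBlow : ∀ t, t < p → B t = A t := by
      intro t ht; simp only [hBdef, hAdef, hip t ht]
    have hsgnup : ∀ t, p ≤ t → t + 1 < m' → B t < B (t + 1) := by
      intro t h1 h2
      simp only [hBdef]
      rw [hit t h1, hit (t + 1) (by omega)]
      exact hTvals (t - p) (t + 1 - p) (by omega) (by omega)
    have hsgndown : 1 ≤ p → B p < B (p - 1) := by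
      intro hp
      simp only [hBdef]
      rw [hit p le_rfl, hip (p - 1) (by omega), Nat.sub_self]
      exact hTjun hp
    -- sign agreement up to p
    have hsgn : ∀ t, t ≤ p →
        ((A t < A (t + 1) ↔ B t < B (t + 1)) ∧ (A (t + 1) < A t ↔ B (t + 1) < B t)) := by
      intro t ht
      rcases Nat.lt_trichotomy (t + 1) p with h1 | h1 | h1
      · rw [hBlow t (by omega), hBlow (t + 1) h1]
        exact ⟨Iff.rfl, Iff.rfl⟩
      · have hp1 : 1 ≤ p := by omega
        have he : p - 1 = t := by omega
        have hjA := hjun hp1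
        have hjB := hsgndown hp1
        rw [he] at hjA hjB
        rw [← h1] at hjA hjB
        constructor
        · exact iff_of_false (by linarith) (by linarith)
        · exact iff_of_true hjA hjB
      · have he : t = p := by omega
        rw [he]
        have hupA : A p < A (p + 1) := hInc p le_rfl (by omega)
        have hupB : B p < B (p + 1) := hsgnup p le_rfl (by omega)
        constructor
        · exact iff_of_true hupA hupB
        · exact iff_of_false (by linarith) (by linarith)
    have htrans : ∀ a b, b ≤ p + 1 → (MonoSlice B a b ↔ MonoSlice A a b) := by
      intro a b hb
      constructor
      · rintro (h | h)
        · left; intro t ht1 ht2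
          exact ((hsgn t (by omega)).1).2 (h t ht1 ht2)
        · right; intro t ht1 ht2
          exact ((hsgn t (by omega)).2).2 (h t ht1 ht2)
      · rintro (h | h)
        · left; intro t ht1 ht2
          exact ((hsgn t (by omega)).1).1 (h t ht1 ht2)
        · right; intro t ht1 ht2
          exact ((hsgn t (by omega)).2).1 (h t ht1 ht2)
    -- index properties of idx'
    have hBbnd : ∀ t, t < m' → idx' t < n := by
      intro t ht
      rcases Nat.lt_or_ge t p with h | h
      · rw [hip t h]; exact (hIdx.1 t (by omega)).2
      · rw [hit t h]; exact hT2 (t - p) (by omega)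
    have hBmono : ∀ s t, s < t → t < m' → idx' s < idx' t := by
      intro s t hst ht
      rcases Nat.lt_or_ge t p with h | h
      · rw [hip s (by omega), hip t h]
        exact hIdx.2 s t hst (by omega)
      · rcases Nat.lt_or_ge s p with h2 | h2
        · rw [hip s h2, hit t h]
          calc idxA s < idxA p := hIdx.2 s p h2 (by omega)
            _ ≤ idxT (t - p) := hT1 (t - p) (by omega)
        · rw [hit s h2, hit t h]
          exact hTmono (s - p) (t - p) (by omega) (by omega)
    have hBdist : ∀ s t, s < t → t < m' → B s ≠ B t := by
      intro s t hst ht hEq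
      have := hS (idx' s) (idx' t) (hBbnd s (by omega)) (hBbnd t ht) hEq
      have := hBmono s t hst ht
      omega
    -- B is a rollercoaster
    have hBRC : IsRollercoaster k m' B := by
      rintro a b ⟨hab, hbm, hmono', hl, hr⟩
      rcases Nat.lt_or_ge p b with hbp | hbp
      · -- b > p: the run is the final increasing run [p, m'-1]
        have hab' : a < b := by
          by_contra hcon
          have hab2 : a = b := by omega
          subst hab2
          rcases hl with h0 | hnm
          · omega
          · apply hnm
            rcases lt_or_gt_of_ne (hBdist (a - 1) a (by omega) (by omega)) with h | h
            · left; intro t ht1 ht2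
              have he : t = a - 1 := by omega
              subst he
              have : a - 1 + 1 = a := by omega
              rw [this]; exact h
            · right; intro t ht1 ht2
              have he : t = a - 1 := by omega
              subst he
              have : a - 1 + 1 = a := by omega
              rw [this]; exact h
        have hincr : IncrSlice B a b := by
          rcases hmono' with h | h
          · exact h
          · exfalso
            have h1 := h (b - 1) (by omega) (by omega)
            have h2 := hsgnup (b - 1) (by omega) (by omega)
            have he : b - 1 + 1 = b := by omega
            rw [he] at h1 h2
            linarith
        have hbtop : b = m' - 1 := by
          by_contra hcon
          have hb1 : b + 1 < m' := by omega
          rcases hr with h' | h'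
          · omega
          · apply h'
            left
            intro t ht1 ht2
            rcases Nat.lt_or_ge t b with h'' | h''
            · exact hincr t ht1 h''
            · have he : t = b := by omega
              rw [he]
              exact hsgnup b (by omega) (by omega)
        have hap : a = p := by
          rcases Nat.lt_trichotomy a p with h | h | h
          · exfalso
            have h1 := hincr (p - 1) (by omega) (by omega)
            have h2 := hsgndown (by omega)
            have he : p - 1 + 1 = p := by omega
            rw [he] at h1
            linarith
          · exact h
          · exfalso
            rcases hl with h0 | hnm
            · omega
            · apply hnm
              left
              intro t ht1 ht2
              exact hsgnup t (by omega) (by omega)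
        omega
      · -- b ≤ p: transfer to a run of A
        have hrunA : IsRun mA A a b := by
          refine ⟨hab, by omega, (htrans a b (by omega)).1 hmono', ?_, ?_⟩
          · rcases hl with h | h
            · exact Or.inl h
            · right; intro hmA
              exact h ((htrans (a - 1) b (by omega)).2 hmA)
          · right
            rcases hr with h | h
            · omega
            · intro hmA
              exact h ((htrans a (b + 1) (by omega)).2 hmA)
        exact hRC a b hrunA
    -- last run of B is increasing
    have hBincr : IncrSlice B p (m' - 1) := by
      intro t ht1 ht2
      exact hsgnup t ht1 (by omega)
    have hBLast : LastRunInc m' B := by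
      refine ⟨by omega, p, ⟨by omega, by omega, Or.inl hBincr, ?_, Or.inl (by omega)⟩, hBincr⟩
      rcases Nat.eq_zero_or_pos p with h0 | h0
      · exact Or.inl h0
      · right
        rintro (h | h)
        · have h1 := h (p - 1) le_rfl (by omega)
          have h2 := hsgndown h0
          have he : p - 1 + 1 = p := by omega
          rw [he] at h1
          linarith
        · have h1 := h p (by omega) (by omega)
          have h2 := hsgnup p le_rfl (by omega)
          linarith
    have hsub : IsSubseqIdx 0 n m' idx' :=
      ⟨fun t ht => ⟨Nat.zero_le _, hBbnd t ht⟩, hBmono⟩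
    have hle := hMax m' idx' hsub hBRC hBLast
    omega
  unfold LIS
  exact le_antisymm (le_csSup hbdd hmem) (csSup_le ⟨mA - p, hmem⟩ hub)

/-- If `A` is of maximum length among all `k`-rollercoasters in `S` whose last run is
increasing (respectively decreasing), `r = A[p : mA-1]` is the last run of `A`, and
`S (idxA p)` is the first element of `r`, then `r` is a longest strictly increasing
(respectively decreasing) subsequence of `S` on positions `[idxA p, n)`. -/
theorem stmt4 (k n : ℕ) (hk : 3 ≤ k) (S : ℕ → ℝ) (hS : DistinctOn n S) :
    (∀ (mA : ℕ) (idxA : ℕ → ℕ) (p : ℕ),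
      IsSubseqIdx 0 n mA idxA →
      IsRollercoaster k mA (fun t => S (idxA t)) →
      LastRunInc mA (fun t => S (idxA t)) →
      (∀ (m' : ℕ) (idx' : ℕ → ℕ), IsSubseqIdx 0 n m' idx' →
        IsRollercoaster k m' (fun t => S (idx' t)) →
        LastRunInc m' (fun t => S (idx' t)) → m' ≤ mA) →
      IsRun mA (fun t => S (idxA t)) p (mA - 1) →
      IncrSlice (fun t => S (idxA t)) p (mA - 1) →
      mA - p = LIS S (idxA p) n) ∧
    (∀ (mA : ℕ) (idxA : ℕ → ℕ) (p : ℕ),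
      IsSubseqIdx 0 n mA idxA →
      IsRollercoaster k mA (fun t => S (idxA t)) →
      LastRunDec mA (fun t => S (idxA t)) →
      (∀ (m' : ℕ) (idx' : ℕ → ℕ), IsSubseqIdx 0 n m' idx' →
        IsRollercoaster k m' (fun t => S (idx' t)) →
        LastRunDec m' (fun t => S (idx' t)) → m' ≤ mA) →
      IsRun mA (fun t => S (idxA t)) p (mA - 1) →
      DecrSlice (fun t => S (idxA t)) p (mA - 1) →
      mA - p = LDS S (idxA p) n) := by
  constructor
  · intro mA idxA p h1 h2 h3 h4 h5 h6
    exact inc_main k n hk S hS mA idxA p h1 h4 h5 h6 h2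
  · intro mA idxA p h1 h2 h3 h4 h5 h6
    have hS' : DistinctOn n (fun j => -S j) := fun i j hi hj h => hS i j hi hj (neg_inj.mp h)
    have key := inc_main k n hk (fun j => -S j) hS' mA idxA p h1
      (fun m' idx' hsub hrc hlast => h4 m' idx' hsub
        ((RC_neg k m' (fun t => S (idx' t))).1 hrc)
        ((LastRunInc_neg m' (fun t => S (idx' t))).1 hlast))
      ((IsRun_neg mA (fun t => S (idxA t)) p (mA - 1)).2 h5)
      ((IncrSlice_neg (fun t => S (idxA t)) p (mA - 1)).2 h6)
      ((RC_neg k mA (fun t => S (idxA t))).2 h2)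
    rw [LDS_neg]
    exact key

end Rollercoaster
end
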